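/- arXiv:1506.06532 — 7 statements merged into one kernel-verified Lean document; each statement's English description precedes it below -/
import Mathlib

section
/- Let v(z) = 1 - |z| and w(z) = 1 - |z|² be weights on the open unit disc Δ ⊂ ℂ. Then for every holomorphic function f on Δ, sup_{z∈Δ} w(z)|f(z²)| = sup_{z∈Δ} v(z)|f(z)|. In particular, the map T(f)(z) = f(z²) is an isometry from H_v(Δ) to H_w(Δ). -/
open Complex Metric

/-- With v(z) = 1 - |z| and w(z) = 1 - |z|² on the unit disc,
for every holomorphic f on Δ, sup_{z∈Δ} w(z)|f(z²)| = sup_{z∈Δ} v(z)|f(z)|;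
i.e. T(f)(z) = f(z²) is an isometry from H_v(Δ) to H_w(Δ). -/
theorem isometry_square_weight_one_minus_abs
    (f : ℂ → ℂ) (hf : DifferentiableOn ℂ f (ball (0:ℂ) 1)) :
    (⨆ z : ball (0:ℂ) 1, (1 - ‖(z:ℂ)‖ ^ 2) * ‖f ((z:ℂ) ^ 2)‖)
      = ⨆ z : ball (0:ℂ) 1, (1 - ‖(z:ℂ)‖) * ‖f (z:ℂ)‖ := by
  have hrange : Set.range (fun z : ball (0:ℂ) 1 =>
      (1 - ‖(z:ℂ)‖ ^ 2) * ‖f ((z:ℂ) ^ 2)‖)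
      = Set.range (fun z : ball (0:ℂ) 1 =>
      (1 - ‖(z:ℂ)‖) * ‖f (z:ℂ)‖) := by
    ext x
    simp only [Set.mem_range, Subtype.exists, mem_ball_zero_iff]
    constructor
    · rintro ⟨z, hz, rfl⟩
      refine ⟨z ^ 2, ?_, ?_⟩
      · rw [norm_pow]
        exact pow_lt_one₀ (norm_nonneg z) hz two_ne_zero
      · rw [norm_pow]
    · rintro ⟨w, hw, rfl⟩
      obtain ⟨z, hz⟩ := IsAlgClosed.exists_pow_nat_eq (k := ℂ) w (n := 2) zero_lt_two
      have habs : ‖z‖ ^ 2 = ‖w‖ := by rw [← norm_pow, hz]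
      refine ⟨z, ?_, ?_⟩
      · show ‖z‖ < 1
        by_contra h
        push_neg at h
        have : (1:ℝ) ≤ ‖z‖ ^ 2 := one_le_pow₀ h
        rw [habs] at this
        exact absurd hw (not_lt.mpr (by simpa using this))
      · rw [habs, hz]
  rw [← sSup_range, ← sSup_range, hrange]
end

section
/- Let v(z) = e^{-1/(1-|z|)} and w(z) = e^{-1/(1-|z|²)} be weights on the open unit disc Δ. Then for every holomorphic function f on Δ, sup_{z∈Δ} w(z)|f(z²)| = sup_{z∈Δ} v(z)|f(z)|. -/
open Complex Metric

lemma sq_mem_ball {z : ℂ} (hz : z ∈ ball (0:ℂ) 1) : z ^ 2 ∈ ball (0:ℂ) 1 := by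
  simp only [mem_ball, dist_zero_right] at *
  calc ‖z ^ 2‖ = ‖z‖ * ‖z‖ := by rw [pow_two, norm_mul]
  _ < 1 := by nlinarith [norm_nonneg z]

lemma exists_sqrt_ball {u : ℂ} (hu : u ∈ ball (0:ℂ) 1) :
    ∃ z ∈ ball (0:ℂ) 1, z ^ 2 = u := by
  refine ⟨u ^ (((2:ℕ):ℂ))⁻¹, ?_, Complex.cpow_nat_inv_pow u (two_ne_zero)⟩
  simp only [mem_ball, dist_zero_right] at *
  have h2 : ‖(u ^ (((2:ℕ):ℂ))⁻¹) ^ 2‖ = ‖u‖ := by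
    rw [Complex.cpow_nat_inv_pow u (two_ne_zero)]
  rw [pow_two, norm_mul] at h2
  nlinarith [norm_nonneg (u ^ (((2:ℕ):ℂ))⁻¹)]

/-- With v(z) = e^{-1/(1-|z|)} and w(z) = e^{-1/(1-|z|²)} on the unit
disc, for every holomorphic f on Δ, sup_{z∈Δ} w(z)|f(z²)| = sup_{z∈Δ} v(z)|f(z)|. -/
theorem isometry_square_weight_exp
    (f : ℂ → ℂ) (hf : DifferentiableOn ℂ f (ball (0:ℂ) 1)) :
    (⨆ z : ball (0:ℂ) 1,
        Real.exp (-1 / (1 - ‖(z:ℂ)‖ ^ 2)) * ‖f ((z:ℂ) ^ 2)‖)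
      = ⨆ z : ball (0:ℂ) 1,
        Real.exp (-1 / (1 - ‖(z:ℂ)‖)) * ‖f (z:ℂ)‖ := by
  have key : ∀ z : ℂ, Real.exp (-1 / (1 - ‖z‖ ^ 2)) * ‖f (z ^ 2)‖
      = Real.exp (-1 / (1 - ‖z ^ 2‖)) * ‖f (z ^ 2)‖ := by
    intro z; rw [norm_pow]
  rw [iSup, iSup]
  congr 1
  ext x
  constructor
  · rintro ⟨⟨z, hz⟩, rfl⟩
    exact ⟨⟨z ^ 2, sq_mem_ball hz⟩, (key z).symm⟩
  · rintro ⟨⟨u, hu⟩, rfl⟩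
    obtain ⟨z, hz, hz2⟩ := exists_sqrt_ball hu
    exact ⟨⟨z, hz⟩, by simp only []; rw [key z, hz2]⟩
end

section
/- Let U and V be bounded open subsets of ℂ and let φ: V → U be a non-constant holomorphic surjection. Let B ⊆ V satisfy φ(B) = U. Then for every a ∈ U and every r > 0, the closure of B ∩ φ⁻¹(B(a,r)) (closure taken in ℂ) has non-empty interior. In particular, the closure of B has non-empty interior. -/
open Metric Set

open Topology

-- local injectivity at points of nonzero derivative
lemma good_of_deriv_ne_zero {V : Set ℂ} (hVopen : IsOpen V) {φ : ℂ → ℂ}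
    (hφ : DifferentiableOn ℂ φ V) {z : ℂ} (hz : z ∈ V) (hd : deriv φ z ≠ 0) :
    ∃ ρ > (0:ℝ), closedBall z ρ ⊆ V ∧ InjOn φ (closedBall z ρ) := by
  have hA : AnalyticAt ℂ φ z := hφ.analyticAt (hVopen.mem_nhds hz)
  have hsf : HasStrictFDerivAt φ (fderiv ℂ φ z) z := hA.hasStrictFDerivAt
  set u : ℂˣ := Units.mk0 _ hd with hu
  have he : (↑(ContinuousLinearEquiv.unitsEquivAut ℂ u) : ℂ →L[ℂ] ℂ) = fderiv ℂ φ z := by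
    apply ContinuousLinearMap.ext_ring
    simp [ContinuousLinearEquiv.unitsEquivAut, hu, ← toSpanSingleton_deriv]
  rw [← he] at hsf
  set H := hsf.toOpenPartialHomeomorph φ with hH
  have hzs : z ∈ H.source := hsf.mem_toOpenPartialHomeomorph_source
  have hos : IsOpen H.source := H.open_source
  have : H.source ∩ V ∈ 𝓝 z := (hos.inter hVopen).mem_nhds ⟨hzs, hz⟩
  obtain ⟨ε, hε, hball⟩ := Metric.mem_nhds_iff.1 this
  refine ⟨ε/2, by linarith, ?_, ?_⟩
  · exact (closedBall_subset_ball (by linarith)).trans (hball.trans inter_subset_right)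
  · have hinj : InjOn φ H.source := by
      have := H.injOn
      rwa [show (H : ℂ → ℂ) = φ from hsf.toOpenPartialHomeomorph_coe] at this
    exact hinj.mono ((closedBall_subset_ball (by linarith)).trans
      (hball.trans inter_subset_left))

-- local constancy where deriv vanishes on a neighborhood
lemma good_of_deriv_eventually_zero {V : Set ℂ} (hVopen : IsOpen V) {φ : ℂ → ℂ}
    (hφ : DifferentiableOn ℂ φ V) {z : ℂ} (hz : z ∈ V)
    (hd : ∀ᶠ x in 𝓝 z, deriv φ x = 0) :
    ∃ ρ > (0:ℝ), closedBall z ρ ⊆ V ∧ ∃ c, ∀ x ∈ closedBall z ρ, φ x = c := by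
  have : {x | deriv φ x = 0} ∩ V ∈ 𝓝 z := Filter.inter_mem hd (hVopen.mem_nhds hz)
  obtain ⟨ε, hε, hball⟩ := Metric.mem_nhds_iff.1 this
  have hbV : ball z ε ⊆ V := hball.trans inter_subset_right
  have hconst : ∀ x ∈ ball z ε, φ x = φ z := by
    intro x hx
    refine (convex_ball z ε).is_const_of_fderivWithin_eq_zero (hφ.mono hbV) ?_ hx
      (mem_ball_self hε)
    intro y hy
    rw [fderivWithin_of_isOpen isOpen_ball hy]
    have hdy : DifferentiableAt ℂ φ y := hφ.differentiableAt (hVopen.mem_nhds (hbV hy))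
    have h0 : deriv φ y = 0 := (hball hy).1
    apply ContinuousLinearMap.ext_ring
    simp [← toSpanSingleton_deriv, h0]
  exact ⟨ε/2, by linarith, (closedBall_subset_ball (by linarith)).trans hbV,
    φ z, fun x hx => hconst x (closedBall_subset_ball (by linarith) hx)⟩

lemma key_lemma (V : Set ℂ) (hVopen : IsOpen V) (φ : ℂ → ℂ) (hφ : DifferentiableOn ℂ φ V)
    (S : Set ℂ) (hSV : S ⊆ V) (W : Set ℂ) (hWopen : IsOpen W) (hWne : W.Nonempty)
    (hWS : W ⊆ φ '' S) : (interior (closure S)).Nonempty := by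
  classical
  set Good : ℂ → Prop := fun z => ∃ ρ > (0:ℝ), closedBall z ρ ⊆ V ∧
      (InjOn φ (closedBall z ρ) ∨ ∃ c, ∀ x ∈ closedBall z ρ, φ x = c) with hGoodDef
  have hdichot : ∀ z ∈ V, Good z ∨ ∀ᶠ x in 𝓝[≠] z, Good x := by
    intro z hz
    have hA : AnalyticAt ℂ (deriv φ) z := ((hφ.analyticOnNhd hVopen).deriv) z hz
    rcases hA.eventually_eq_zero_or_eventually_ne_zero with h | h
    · left
      obtain ⟨ρ, hρ, h1, c, h2⟩ := good_of_deriv_eventually_zero hVopen hφ hz h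
      exact ⟨ρ, hρ, h1, Or.inr ⟨c, h2⟩⟩
    · right
      have hV' : ∀ᶠ x in 𝓝[≠] z, x ∈ V :=
        ((hVopen.eventually_mem hz).filter_mono nhdsWithin_le_nhds)
      filter_upwards [h, hV'] with x h1 h2
      obtain ⟨ρ, hρ, hsub, hinj⟩ := good_of_deriv_ne_zero hVopen hφ h2 h1
      exact ⟨ρ, hρ, hsub, Or.inl hinj⟩
  set Bad : Set ℂ := {z ∈ S | ¬ Good z} with hBadDef
  have hBadc : Bad.Countable := by
    have hdisc : DiscreteTopology Bad := by
      rw [discreteTopology_subtype_iff]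
      intro x hx
      rcases hdichot x (hSV hx.1) with h | h
      · exact absurd h hx.2
      · rw [Filter.inf_principal_eq_bot]
        filter_upwards [h] with y hy hyB
        exact hyB.2 hy
    exact (HereditarilyLindelof_LindelofSets Bad).countable hdisc
  set GS : Set ℂ := {z ∈ S | Good z} with hGSDef
  have hex : ∀ z ∈ GS, ∃ ρ, 0 < ρ ∧ closedBall z ρ ⊆ V ∧
      (InjOn φ (closedBall z ρ) ∨ ∃ c, ∀ x ∈ closedBall z ρ, φ x = c) := by
    intro z hz
    obtain ⟨ρ, h1, h2, h3⟩ := hz.2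
    exact ⟨ρ, h1, h2, h3⟩
  choose! ρ hρpos hρV hρalt using hex
  obtain ⟨t, hts, htc, htcov⟩ := TopologicalSpace.countable_cover_nhdsWithin
    (f := fun z => ball z (ρ z / 2)) (s := GS)
    (fun z hz => mem_nhdsWithin_of_mem_nhds (ball_mem_nhds z (by linarith [hρpos z hz])))
  set F : ℂ → Set ℂ := fun z => closure (φ '' (S ∩ closedBall z (ρ z / 2))) with hFdef
  have hmain : ∃ z ∈ t, (interior (F z)).Nonempty := by
    by_contra hno
    push_neg at hno
    set 𝒢 : Set (Set ℂ) := ((fun z => (F z)ᶜ) '' t) ∪ ((fun z => ({φ z}ᶜ : Set ℂ)) '' Bad)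
      with h𝒢
    have hGopen : ∀ s ∈ 𝒢, IsOpen s := by
      rintro s (⟨z, hz, rfl⟩ | ⟨z, hz, rfl⟩)
      · exact isClosed_closure.isOpen_compl
      · exact isOpen_compl_singleton
    have hGcount : 𝒢.Countable := (htc.image _).union (hBadc.image _)
    have hGdense : ∀ s ∈ 𝒢, Dense s := by
      rintro s (⟨z, hz, rfl⟩ | ⟨z, hz, rfl⟩)
      · rw [← interior_eq_empty_iff_dense_compl]
        exact hno z hz
      · exact dense_compl_singleton _
    have hdense := dense_sInter_of_isOpen hGopen hGcount hGdense
    obtain ⟨w, hwi, hwW⟩ := hdense.exists_mem_open hWopen hWne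
    rw [mem_sInter] at hwi
    obtain ⟨b, hbS, hbw⟩ := hWS hwW
    by_cases hb : Good b
    · obtain ⟨z, hzt, hzb⟩ := mem_iUnion₂.1 (htcov ⟨hbS, hb⟩)
      have hwF : w ∈ F z := subset_closure ⟨b, ⟨hbS, ball_subset_closedBall hzb⟩, hbw⟩
      exact (hwi _ (Or.inl ⟨z, hzt, rfl⟩)) hwF
    · have hw' : w ∈ ({φ b}ᶜ : Set ℂ) := hwi _ (Or.inr ⟨b, ⟨hbS, hb⟩, rfl⟩)
      exact hw' (by simp [hbw])
  obtain ⟨z, hzt, hO⟩ := hmain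
  have hzGS : z ∈ GS := hts hzt
  set T : Set ℂ := S ∩ closedBall z (ρ z / 2) with hTdef
  have hρ0 : 0 < ρ z := hρpos z hzGS
  have hcb2 : closedBall z (ρ z / 2) ⊆ ball z (ρ z) := closedBall_subset_ball (by linarith)
  have hTcl : closure T ⊆ closedBall z (ρ z / 2) :=
    closure_minimal inter_subset_right isClosed_closedBall
  have hcbV : closedBall z (ρ z) ⊆ V := hρV z hzGS
  have hcont : ContinuousOn φ (closure T) :=
    hφ.continuousOn.mono (((hTcl.trans hcb2).trans ball_subset_closedBall).trans hcbV)
  have hcompact : IsCompact (closure T) :=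
    (isCompact_closedBall z (ρ z / 2)).of_isClosed_subset isClosed_closure hTcl
  have hFsub : F z ⊆ φ '' closure T :=
    closure_minimal (image_mono subset_closure)
      (hcompact.image_of_continuousOn hcont).isClosed
  rcases hρalt z hzGS with hinj | ⟨c, hc⟩
  · set P : Set ℂ := ball z (ρ z) ∩ φ ⁻¹' interior (F z) with hPdef
    have hPopen : IsOpen P :=
      (hφ.continuousOn.mono (ball_subset_closedBall.trans hcbV)).isOpen_inter_preimage
        isOpen_ball isOpen_interior
    have hPne : P.Nonempty := by
      obtain ⟨w, hw⟩ := hO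
      obtain ⟨x, hxT, hxw⟩ := hFsub (interior_subset hw)
      exact ⟨x, hcb2 (hTcl hxT), by simp only [Set.mem_preimage]; rw [hxw]; exact hw⟩
    have hPsub : P ⊆ closure T := by
      rintro p ⟨hp1, hp2⟩
      obtain ⟨q, hqT, hqp⟩ := hFsub (interior_subset hp2)
      have hq : q ∈ closedBall z (ρ z) := ball_subset_closedBall (hcb2 (hTcl hqT))
      have : q = p := hinj hq (ball_subset_closedBall hp1) hqp
      exact this ▸ hqT
    obtain ⟨p, hp⟩ := hPne
    exact ⟨p, interior_maximal (hPsub.trans (closure_mono inter_subset_left)) hPopen hp⟩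
  · exfalso
    have hF1 : F z ⊆ {c} := by
      apply closure_minimal ?_ isClosed_singleton
      rintro w ⟨x, ⟨hxS, hxb⟩, rfl⟩
      exact hc x (closedBall_subset_closedBall (by linarith) hxb)
    obtain ⟨w, hw⟩ := hO
    have := interior_mono hF1 hw
    rw [interior_singleton] at this
    exact this

/-- If U, V are bounded open subsets of ℂ, φ : V → U is a
non-constant holomorphic surjection and B ⊆ V satisfies φ(B) = U, then for every
a ∈ U and r > 0 the closure of B ∩ φ⁻¹(B(a,r)) has non-empty interior; in
particular the closure of B has non-empty interior. -/
theorem closure_preimage_nonempty_interior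
    (U V : Set ℂ) (hUopen : IsOpen U) (hUbdd : Bornology.IsBounded U)
    (hVopen : IsOpen V) (hVbdd : Bornology.IsBounded V)
    (φ : ℂ → ℂ) (hφ : DifferentiableOn ℂ φ V)
    (hφsurj : φ '' V = U)
    (hφnc : ¬ ∃ c : ℂ, ∀ z ∈ V, φ z = c)
    (B : Set ℂ) (hBV : B ⊆ V) (hBU : φ '' B = U) :
    (∀ a ∈ U, ∀ r > (0:ℝ),
        (interior (closure (B ∩ φ ⁻¹' ball a r))).Nonempty) ∧
      (interior (closure B)).Nonempty := by

  have h1 : ∀ a ∈ U, ∀ r > (0:ℝ),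
      (interior (closure (B ∩ φ ⁻¹' ball a r))).Nonempty := by
    intro a ha r hr
    apply key_lemma V hVopen φ hφ _ (inter_subset_left.trans hBV) (U ∩ ball a r)
      (hUopen.inter isOpen_ball) ⟨a, ha, mem_ball_self hr⟩
    rintro w ⟨hwU, hwb⟩
    rw [← hBU] at hwU
    obtain ⟨b, hbB, rfl⟩ := hwU
    exact ⟨b, ⟨hbB, hwb⟩, rfl⟩
  refine ⟨h1, ?_⟩
  push_neg at hφnc
  obtain ⟨z, hzV, -⟩ := hφnc 0
  have haU : φ z ∈ U := hφsurj ▸ ⟨z, hzV, rfl⟩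
  obtain ⟨p, hp⟩ := h1 (φ z) haU 1 one_pos
  exact ⟨p, interior_mono (closure_mono inter_subset_left) hp⟩
end

section
/- Let v be a radial weight on the open unit disc Δ and let φ: Δ → Δ be an analytic automorphism of Δ. Suppose T: H_{v_o}(Δ) → H_{v_o}(Δ) is a linear isometry of the form T(f)(z) = φ'(z)·f(φ(z)). Then T is surjective, with inverse S(g)(z) = (φ⁻¹)'(z)·g(φ⁻¹(z)). -/
open Complex Metric Set

/-- `f` belongs to `H_{v_o}(Δ)`: holomorphic on the unit disc and `v(z)|f(z)| → 0`
as `|z| → 1`. -/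
def MemHv0 (v : ℂ → ℝ) (f : ℂ → ℂ) : Prop :=
  DifferentiableOn ℂ f (ball (0:ℂ) 1) ∧
    ∀ ε > (0:ℝ), ∃ δ < (1:ℝ), ∀ z : ℂ, ‖z‖ < 1 → δ < ‖z‖ →
      v z * ‖f z‖ < ε

noncomputable def psiM (a x : ℂ) : ℂ := (a - x) / (1 - (starRingEnd ℂ) a * x)

lemma psiM_denom_ne {a x : ℂ} (ha : ‖a‖ < 1) (hx : ‖x‖ < 1) :
    (1 : ℂ) - (starRingEnd ℂ) a * x ≠ 0 := by
  intro h
  have h1 : (starRingEnd ℂ) a * x = 1 := by linear_combination -h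
  have h2 : ‖(starRingEnd ℂ) a * x‖ = 1 := by rw [h1]; simp
  rw [norm_mul, Complex.norm_conj] at h2
  nlinarith [norm_nonneg a, norm_nonneg x]

lemma psiM_key (a x : ℂ) :
    Complex.normSq (1 - (starRingEnd ℂ) a * x) - Complex.normSq (a - x)
      = (1 - Complex.normSq a) * (1 - Complex.normSq x) := by
  have h : ((Complex.normSq (1 - (starRingEnd ℂ) a * x) : ℂ)) - (Complex.normSq (a - x) : ℂ)
      = (1 - (Complex.normSq a : ℂ)) * (1 - (Complex.normSq x : ℂ)) := by
    rw [← Complex.mul_conj, ← Complex.mul_conj, ← Complex.mul_conj, ← Complex.mul_conj]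
    simp only [map_sub, map_mul, map_one, Complex.conj_conj]
    ring
  exact_mod_cast h

lemma abs_psiM_lt {a x : ℂ} (ha : ‖a‖ < 1) (hx : ‖x‖ < 1) :
    ‖psiM a x‖ < 1 := by
  have hd := psiM_denom_ne ha hx
  have hdpos : 0 < ‖1 - (starRingEnd ℂ) a * x‖ := norm_pos_iff.mpr hd
  have hkey := psiM_key a x
  have hna : Complex.normSq a < 1 := by
    rw [← Complex.sq_norm]; nlinarith [norm_nonneg a]
  have hnx : Complex.normSq x < 1 := by
    rw [← Complex.sq_norm]; nlinarith [norm_nonneg x]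
  have h1 : 0 < (1 - Complex.normSq a) * (1 - Complex.normSq x) :=
    mul_pos (by linarith) (by linarith)
  have h2 : Complex.normSq (a - x) < Complex.normSq (1 - (starRingEnd ℂ) a * x) := by linarith
  have h3 : ‖a - x‖ < ‖1 - (starRingEnd ℂ) a * x‖ := by
    have := Complex.sq_norm (a - x); have := Complex.sq_norm (1 - (starRingEnd ℂ) a * x)
    nlinarith [norm_nonneg (a - x)]
  rw [psiM, norm_div]
  exact (div_lt_one hdpos).mpr h3

lemma psiM_invol {a x : ℂ} (ha : ‖a‖ < 1) (hx : ‖x‖ < 1) :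
    psiM a (psiM a x) = x := by
  have h1 : (1 : ℂ) - (starRingEnd ℂ) a * x ≠ 0 := psiM_denom_ne ha hx
  have h2 : (1 : ℂ) - (starRingEnd ℂ) a * a ≠ 0 := psiM_denom_ne ha ha
  have h2' : (1 : ℂ) - a * (starRingEnd ℂ) a ≠ 0 := by rwa [mul_comm] at h2
  unfold psiM
  rw [sub_div' h1, mul_div_assoc', one_sub_div h1, div_div_div_cancel_right₀ h1]
  rw [div_eq_iff]
  · ring
  · have hh : 1 - (starRingEnd ℂ) a * x - (starRingEnd ℂ) a * (a - x)
        = 1 - (starRingEnd ℂ) a * a := by ring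
    rw [hh]; exact h2

lemma psiM_self (a : ℂ) : psiM a a = 0 := by simp [psiM]

lemma psiM_zero (a : ℂ) : psiM a 0 = a := by simp [psiM]

lemma psiM_diffOn {a : ℂ} (ha : ‖a‖ < 1) :
    DifferentiableOn ℂ (psiM a) (ball (0:ℂ) 1) := by
  apply DifferentiableOn.div
  · exact (differentiable_const a).differentiableOn.sub differentiable_id.differentiableOn
  · exact (differentiable_const _).differentiableOn.sub
      ((differentiable_const _).mul differentiable_id).differentiableOn
  · intro x hx
    exact psiM_denom_ne ha (mem_ball_zero_iff.mp hx)

lemma psiM_mapsTo {a : ℂ} (ha : ‖a‖ < 1) :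
    MapsTo (psiM a) (ball (0:ℂ) 1) (ball (0:ℂ) 1) := fun x hx =>
  mem_ball_zero_iff.mpr (abs_psiM_lt ha (mem_ball_zero_iff.mp hx))

lemma psiM_neg_zero (w : ℂ) : psiM 0 w = -w := by simp [psiM]

lemma psiM_sub_self {c u : ℂ} (hd : (1:ℂ) - (starRingEnd ℂ) c * u ≠ 0) :
    psiM c u - c = u * (c * (starRingEnd ℂ) c - 1) / (1 - (starRingEnd ℂ) c * u) := by
  unfold psiM
  rw [div_sub' hd, div_left_inj' hd]
  ring

lemma one_sub_abs_le {t : ℂ} : 1 - ‖t‖ ≤ ‖1 - t‖ := by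
  have h := norm_add_le (1 - t) t
  simp only [sub_add_cancel, norm_one] at h
  linarith

section Inv

variable {φ σ : ℂ → ℂ}
variable (hφ : DifferentiableOn ℂ φ (ball (0:ℂ) 1))
variable (hσ : DifferentiableOn ℂ σ (ball (0:ℂ) 1))
variable (hφmaps : MapsTo φ (ball (0:ℂ) 1) (ball (0:ℂ) 1))
variable (hσmaps : MapsTo σ (ball (0:ℂ) 1) (ball (0:ℂ) 1))
variable (hleft : ∀ z ∈ ball (0:ℂ) 1, σ (φ z) = z)
variable (hright : ∀ z ∈ ball (0:ℂ) 1, φ (σ z) = z)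

include hφ hσ hφmaps hσmaps hright in
lemma psiM_invariance {z₀ : ℂ} (hz₀ : z₀ ∈ ball (0:ℂ) 1) {w : ℂ} (hw : w ∈ ball (0:ℂ) 1) :
    ‖psiM (σ z₀) (σ w)‖ = ‖psiM z₀ w‖ := by
  have hz₀' : ‖z₀‖ < 1 := mem_ball_zero_iff.mp hz₀
  have hσz₀ : σ z₀ ∈ ball (0:ℂ) 1 := hσmaps hz₀
  have hσz₀' : ‖σ z₀‖ < 1 := mem_ball_zero_iff.mp hσz₀
  set A : ℂ → ℂ := fun u => psiM (σ z₀) (σ (psiM z₀ u)) with hA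
  set Bf : ℂ → ℂ := fun u => psiM z₀ (φ (psiM (σ z₀) u)) with hB
  have hAdiff : DifferentiableOn ℂ A (ball (0:ℂ) 1) := by
    have h1 : DifferentiableOn ℂ (σ ∘ psiM z₀) (ball (0:ℂ) 1) :=
      hσ.comp (psiM_diffOn hz₀') (psiM_mapsTo hz₀')
    exact (psiM_diffOn hσz₀').comp h1 ((hσmaps).comp (psiM_mapsTo hz₀'))
  have hBdiff : DifferentiableOn ℂ Bf (ball (0:ℂ) 1) := by
    have h1 : DifferentiableOn ℂ (φ ∘ psiM (σ z₀)) (ball (0:ℂ) 1) :=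
      hφ.comp (psiM_diffOn hσz₀') (psiM_mapsTo hσz₀')
    exact (psiM_diffOn hz₀').comp h1 ((hφmaps).comp (psiM_mapsTo hσz₀'))
  have hAmaps : MapsTo A (ball (0:ℂ) 1) (ball (0:ℂ) 1) :=
    (psiM_mapsTo hσz₀').comp ((hσmaps).comp (psiM_mapsTo hz₀'))
  have hBmaps : MapsTo Bf (ball (0:ℂ) 1) (ball (0:ℂ) 1) :=
    (psiM_mapsTo hz₀').comp ((hφmaps).comp (psiM_mapsTo hσz₀'))
  have hA0 : A 0 = 0 := by
    simp only [hA, psiM_zero, psiM_self]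
  have hB0 : Bf 0 = 0 := by
    simp only [hB, psiM_zero]
    rw [hright z₀ hz₀, psiM_self]
  have hAle : ∀ u : ℂ, ‖u‖ < 1 → ‖A u‖ ≤ ‖u‖ :=
    fun u hu => Complex.norm_le_norm_of_mapsTo_ball hAdiff (hAmaps.mono_right ball_subset_closedBall) hA0 hu
  have hBle : ∀ u : ℂ, ‖u‖ < 1 → ‖Bf u‖ ≤ ‖u‖ :=
    fun u hu => Complex.norm_le_norm_of_mapsTo_ball hBdiff (hBmaps.mono_right ball_subset_closedBall) hB0 hu
  have hBA : ∀ u : ℂ, ‖u‖ < 1 → Bf (A u) = u := by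
    intro u hu
    have h1 : ‖psiM z₀ u‖ < 1 := abs_psiM_lt hz₀' hu
    have h2 : σ (psiM z₀ u) ∈ ball (0:ℂ) 1 := hσmaps (mem_ball_zero_iff.mpr h1)
    simp only [hA, hB]
    rw [psiM_invol hσz₀' (mem_ball_zero_iff.mp h2), hright _ (mem_ball_zero_iff.mpr h1),
        psiM_invol hz₀' hu]
  set u := psiM z₀ w with hu
  have huw : ‖u‖ < 1 := abs_psiM_lt hz₀' (mem_ball_zero_iff.mp hw)
  have heq : ‖A u‖ = ‖u‖ := by
    refine le_antisymm (hAle u huw) ?_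
    have h1 : ‖Bf (A u)‖ ≤ ‖A u‖ :=
      hBle _ (mem_ball_zero_iff.mp (hAmaps (mem_ball_zero_iff.mpr huw)))
    rwa [hBA u huw] at h1
  have hAu : A u = psiM (σ z₀) (σ w) := by
    simp only [hA, hu]
    rw [psiM_invol hz₀' (mem_ball_zero_iff.mp hw)]
  rw [← hAu, heq]

include hφ hσ hφmaps hσmaps hright in
lemma oneSubSq_le {w : ℂ} (hw : w ∈ ball (0:ℂ) 1) :
    1 - (‖σ w‖)^2
      ≤ 4 / (1 - (‖σ 0‖)^2) * (1 - (‖w‖)^2) := by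
  have h0 : (0:ℂ) ∈ ball (0:ℂ) 1 := by simp
  have hinv := psiM_invariance hφ hσ hφmaps hσmaps hright h0 hw
  rw [psiM_neg_zero, norm_neg] at hinv
  set b := σ 0 with hbdef
  set y := σ w with hydef
  have hb : ‖b‖ < 1 := mem_ball_zero_iff.mp (hσmaps h0)
  have hy : ‖y‖ < 1 := mem_ball_zero_iff.mp (hσmaps hw)
  have hwa : ‖w‖ < 1 := mem_ball_zero_iff.mp hw
  have hd : (1:ℂ) - (starRingEnd ℂ) b * y ≠ 0 := psiM_denom_ne hb hy
  have hdpos : 0 < ‖1 - (starRingEnd ℂ) b * y‖ := norm_pos_iff.mpr hd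
  have habs : ‖b - y‖ = ‖w‖ * ‖1 - (starRingEnd ℂ) b * y‖ := by
    rw [← hinv, psiM, norm_div, div_mul_cancel₀]
    exact ne_of_gt hdpos
  have hkey := psiM_key b y
  have hsq1 : Complex.normSq (b - y) = (‖w‖)^2 * Complex.normSq (1 - (starRingEnd ℂ) b * y) := by
    rw [← Complex.sq_norm, ← Complex.sq_norm (1 - (starRingEnd ℂ) b * y), habs]; ring
  have hA1le : Complex.normSq (1 - (starRingEnd ℂ) b * y) ≤ 4 := by
    have h1 : ‖1 - (starRingEnd ℂ) b * y‖ ≤ 1 + ‖(starRingEnd ℂ) b * y‖ := by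
      have h := norm_add_le 1 (-((starRingEnd ℂ) b * y))
      rw [← sub_eq_add_neg, norm_one, norm_neg] at h
      exact h
    have h2 : ‖(starRingEnd ℂ) b * y‖ ≤ 1 := by
      rw [norm_mul, Complex.norm_conj]
      nlinarith [norm_nonneg b, norm_nonneg y]
    rw [← Complex.sq_norm]
    nlinarith [norm_nonneg (1 - (starRingEnd ℂ) b * y)]
  have hbsq : Complex.normSq b = (‖b‖)^2 := (Complex.sq_norm b).symm
  have hysq : Complex.normSq y = (‖y‖)^2 := (Complex.sq_norm y).symm
  have hpos : 0 < 1 - (‖b‖)^2 := by nlinarith [norm_nonneg b]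
  rw [div_mul_eq_mul_div, le_div_iff₀ hpos]
  have hw2 : 0 ≤ 1 - (‖w‖)^2 := by nlinarith [norm_nonneg w]
  nlinarith [hkey, hsq1, hA1le, hw2, Complex.normSq_nonneg (1 - (starRingEnd ℂ) b * y)]

include hφ hσ hφmaps hσmaps hright in
set_option maxHeartbeats 1000000 in
lemma deriv_sigma_bound {z : ℂ} (hz : z ∈ ball (0:ℂ) 1) :
    ‖deriv σ z‖ ≤ 16 / (1 - (‖σ 0‖)^2) := by
  have h0 : (0:ℂ) ∈ ball (0:ℂ) 1 := by simp
  have hb : ‖σ 0‖ < 1 := mem_ball_zero_iff.mp (hσmaps h0)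
  have hbpos : 0 < 1 - (‖σ 0‖)^2 := by nlinarith [norm_nonneg (σ 0)]
  set K : ℝ := 4 / (1 - (‖σ 0‖)^2) with hK
  have hKpos : 0 < K := by positivity
  have hzb : ‖z‖ < 1 := mem_ball_zero_iff.mp hz
  have hz2 : 0 < 1 - ‖z‖ := by linarith
  set R₁ : ℝ := (1 - ‖z‖) / 2 with hR₁
  have hR₁pos : 0 < R₁ := by positivity
  set R₂ : ℝ := 2 * K * (1 - ‖z‖) with hR₂
  have hR₂pos : 0 < R₂ := by positivity
  have hσz : σ z ∈ ball (0:ℂ) 1 := hσmaps hz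
  have hσza : ‖σ z‖ < 1 := mem_ball_zero_iff.mp hσz
  have hsub : ball z R₁ ⊆ ball (0:ℂ) 1 := by
    intro w hw
    rw [mem_ball, Complex.dist_eq] at hw
    have h1 : ‖w‖ ≤ ‖w - z‖ + ‖z‖ := by
      have := norm_add_le (w - z) z
      simpa using this
    have h2 : ‖w - z‖ < R₁ := hw
    rw [hR₁] at h2
    have h3 : ‖w‖ < 1 := by linarith
    exact mem_ball_zero_iff.mpr h3
  have hmaps2 : MapsTo σ (ball z R₁) (ball (σ z) R₂) := by
    intro w hw
    have hwb : w ∈ ball (0:ℂ) 1 := hsub hw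
    have hwa : ‖w‖ < 1 := mem_ball_zero_iff.mp hwb
    rw [mem_ball, Complex.dist_eq] at hw
    have hwz : ‖w - z‖ < R₁ := hw
    have hσw : σ w ∈ ball (0:ℂ) 1 := hσmaps hwb
    have hσwa : ‖σ w‖ < 1 := mem_ball_zero_iff.mp hσw
    -- pseudo-hyperbolic distance of w and z is < 1/2
    have hden1 : 1 - ‖z‖ ≤ ‖1 - (starRingEnd ℂ) z * w‖ := by
      have h1 := one_sub_abs_le (t := (starRingEnd ℂ) z * w)
      have h2 : ‖(starRingEnd ℂ) z * w‖ ≤ ‖z‖ := by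
        rw [norm_mul, Complex.norm_conj]
        nlinarith [norm_nonneg z, norm_nonneg w]
      linarith
    have hdenpos : 0 < ‖1 - (starRingEnd ℂ) z * w‖ := lt_of_lt_of_le hz2 hden1
    have hd : ‖psiM z w‖ < 1/2 := by
      rw [psiM, norm_div, div_lt_iff₀ hdenpos]
      have h3 : ‖z - w‖ < R₁ := by
        rw [norm_sub_rev]; exact hwz
      rw [hR₁] at h3
      nlinarith
    set u := psiM (σ z) (σ w) with hu
    have hdu : ‖u‖ = ‖psiM z w‖ :=
      psiM_invariance hφ hσ hφmaps hσmaps hright hz hwb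
    have hdu2 : ‖u‖ < 1/2 := by rw [hdu]; exact hd
    have hdu1 : ‖u‖ < 1 := by linarith
    have hσwu : σ w = psiM (σ z) u := (psiM_invol hσza hσwa).symm
    have hden2 : (1:ℂ) - (starRingEnd ℂ) (σ z) * u ≠ 0 := psiM_denom_ne hσza hdu1
    have hdiff : σ w - σ z
        = u * (σ z * (starRingEnd ℂ) (σ z) - 1) / (1 - (starRingEnd ℂ) (σ z) * u) := by
      conv_lhs => rw [hσwu]
      exact psiM_sub_self hden2
    have hσzsq : 0 < 1 - (‖σ z‖)^2 := by nlinarith [norm_nonneg (σ z)]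
    have habsnum : ‖σ z * (starRingEnd ℂ) (σ z) - 1‖ = 1 - (‖σ z‖)^2 := by
      rw [Complex.mul_conj]
      have h4 : ((Complex.normSq (σ z) : ℂ) - 1) = ((Complex.normSq (σ z) - 1 : ℝ) : ℂ) := by
        push_cast; ring
      rw [h4, Complex.norm_real, Real.norm_eq_abs, abs_of_nonpos (by nlinarith [Complex.sq_norm (σ z)])]
      rw [← Complex.sq_norm]; ring
    have habsden : 1 - ‖u‖ ≤ ‖1 - (starRingEnd ℂ) (σ z) * u‖ := by
      have h1 := one_sub_abs_le (t := (starRingEnd ℂ) (σ z) * u)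
      have h2 : ‖(starRingEnd ℂ) (σ z) * u‖ ≤ ‖u‖ := by
        rw [norm_mul, Complex.norm_conj]
        nlinarith [norm_nonneg (σ z), norm_nonneg u]
      linarith
    have habsdenpos : 0 < ‖1 - (starRingEnd ℂ) (σ z) * u‖ := by linarith
    have heqabs : ‖σ w - σ z‖
        = ‖u‖ * (1 - (‖σ z‖)^2) / ‖1 - (starRingEnd ℂ) (σ z) * u‖ := by
      rw [hdiff, norm_div, norm_mul, habsnum]
    have hS : 1 - (‖σ z‖)^2 ≤ K * (1 - (‖z‖)^2) :=
      oneSubSq_le hφ hσ hφmaps hσmaps hright hz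
    have h1z2 : 1 - (‖z‖)^2 ≤ 2 * (1 - ‖z‖) := by
      nlinarith [norm_nonneg z]
    rw [mem_ball, Complex.dist_eq, heqabs, div_lt_iff₀ habsdenpos]
    have s1 : ‖u‖ * (1 - (‖σ z‖)^2)
        < (1/2) * (1 - (‖σ z‖)^2) :=
      mul_lt_mul_of_pos_right hdu2 hσzsq
    have s2' : K * (1 - (‖z‖)^2) ≤ K * (2 * (1 - ‖z‖)) :=
      mul_le_mul_of_nonneg_left h1z2 (le_of_lt hKpos)
    have s2 : (1/2) * (1 - (‖σ z‖)^2) ≤ K * (1 - ‖z‖) := by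
      linarith
    have h5 : (1:ℝ)/2 ≤ ‖1 - (starRingEnd ℂ) (σ z) * u‖ := by linarith
    have s3' : R₂ * (1/2) ≤ R₂ * ‖1 - (starRingEnd ℂ) (σ z) * u‖ :=
      mul_le_mul_of_nonneg_left h5 (le_of_lt hR₂pos)
    have e : R₂ * (1/2) = K * (1 - ‖z‖) := by rw [hR₂]; ring
    linarith
  have hderiv := Complex.norm_deriv_le_div_of_mapsTo_ball (hσ.mono hsub) (hmaps2.mono_right ball_subset_closedBall) hR₁pos
  have hcalc : R₂ / R₁ = 16 / (1 - (‖σ 0‖)^2) := by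
    rw [hR₂, hR₁, hK]
    field_simp
    ring
  rw [hcalc] at hderiv
  exact hderiv

end Inv

lemma maxmod_circle {h : ℂ → ℂ} (hh : DifferentiableOn ℂ h (ball (0:ℂ) 1))
    {w : ℂ} (hw : w ∈ ball (0:ℂ) 1) {y : ℂ} (hy : ‖y‖ ≤ ‖w‖) :
    ∃ x₀ : ℂ, ‖x₀‖ = ‖w‖ ∧ ‖h y‖ ≤ ‖h x₀‖ := by
  rcases eq_or_ne w 0 with rfl | hw0
  · have hy0 : y = 0 := by
      have h1 : ‖y‖ ≤ 0 := by simpa using hy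
      exact norm_eq_zero.mp (le_antisymm h1 (norm_nonneg y))
    exact ⟨0, by simp, by rw [hy0]⟩
  · set r := ‖w‖ with hr
    have hr0 : 0 < r := norm_pos_iff.mpr hw0
    have hr1 : r < 1 := mem_ball_zero_iff.mp hw
    have hsub1 : sphere (0:ℂ) r ⊆ ball (0:ℂ) 1 := by
      intro x hx
      rw [mem_sphere_zero_iff_norm] at hx
      exact mem_ball_zero_iff.mpr (by rw [hx]; exact hr1)
    have hne : (sphere (0:ℂ) r).Nonempty := ⟨w, by simp [mem_sphere_zero_iff_norm, hr]⟩
    have hcont : ContinuousOn (fun x => ‖h x‖) (sphere (0:ℂ) r) :=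
      ((hh.continuousOn).mono hsub1).norm
    obtain ⟨x₀, hx₀mem, hx₀max⟩ := (isCompact_sphere (0:ℂ) r).exists_isMaxOn hne hcont
    have hclos : closure (ball (0:ℂ) r) = closedBall (0:ℂ) r := closure_ball 0 (ne_of_gt hr0)
    have hfront : frontier (ball (0:ℂ) r) = sphere (0:ℂ) r := frontier_ball 0 (ne_of_gt hr0)
    have hsub2 : closedBall (0:ℂ) r ⊆ ball (0:ℂ) 1 := by
      intro x hx
      rw [mem_closedBall_zero_iff] at hx
      exact mem_ball_zero_iff.mpr (lt_of_le_of_lt hx hr1)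
    have hdc : DiffContOnCl ℂ h (ball (0:ℂ) r) := by
      constructor
      · exact hh.mono (fun x hx => hsub2 (ball_subset_closedBall hx))
      · rw [hclos]; exact hh.continuousOn.mono hsub2
    have hyc : y ∈ closure (ball (0:ℂ) r) := by
      rw [hclos]; exact mem_closedBall_zero_iff.mpr hy
    have hbound := Complex.norm_le_of_forall_mem_frontier_norm_le isBounded_ball hdc
      (fun x hx => by rw [hfront] at hx; exact hx₀max hx) hyc
    refine ⟨x₀, ?_, hbound⟩
    rw [mem_sphere_zero_iff_norm] at hx₀mem
    exact hx₀mem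

lemma radial_eq (v : ℂ → ℝ)
    (hvradial : ∀ (lam z : ℂ), ‖lam‖ = 1 → z ∈ ball (0:ℂ) 1 → v (lam * z) = v z)
    {x w : ℂ} (hw : w ∈ ball (0:ℂ) 1) (hxw : ‖x‖ = ‖w‖) : v x = v w := by
  rcases eq_or_ne w 0 with rfl | hw0
  · have : x = 0 := norm_eq_zero.mp (by simpa using hxw)
    rw [this]
  · have habs : ‖x / w‖ = 1 := by
      rw [norm_div, hxw, div_self (ne_of_gt (norm_pos_iff.mpr hw0))]
    have hx : x = (x / w) * w := (div_mul_cancel₀ x hw0).symm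
    rw [hx]
    exact hvradial _ w habs hw

set_option maxHeartbeats 1000000 in
lemma star_bound
    (v : ℂ → ℝ)
    (hvpos : ∀ z ∈ ball (0:ℂ) 1, 0 < v z)
    (hvradial : ∀ (lam z : ℂ), ‖lam‖ = 1 → z ∈ ball (0:ℂ) 1 → v (lam * z) = v z)
    {M : ℝ} (hM : ∀ z ∈ ball (0:ℂ) 1, v z ≤ M)
    (φ σ : ℂ → ℂ)
    (hφ : DifferentiableOn ℂ φ (ball (0:ℂ) 1))
    (hσ : DifferentiableOn ℂ σ (ball (0:ℂ) 1))
    (hφmaps : MapsTo φ (ball (0:ℂ) 1) (ball (0:ℂ) 1))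
    (hσmaps : MapsTo σ (ball (0:ℂ) 1) (ball (0:ℂ) 1))
    (hleft : ∀ z ∈ ball (0:ℂ) 1, σ (φ z) = z)
    (hright : ∀ z ∈ ball (0:ℂ) 1, φ (σ z) = z)
    (hTisom : ∀ f : ℂ → ℂ, MemHv0 v f →
      (⨆ z : ball (0:ℂ) 1, v z * ‖deriv φ z * f (φ z)‖)
        = ⨆ z : ball (0:ℂ) 1, v z * ‖f z‖)
    (hv0 : ∀ ε > (0:ℝ), ∃ δ < (1:ℝ), ∀ z : ℂ, ‖z‖ < 1 → δ < ‖z‖ → v z < ε)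
    {Cσ : ℝ} (hCσpos : 0 < Cσ) (hCσ : ∀ z ∈ ball (0:ℂ) 1, ‖deriv σ z‖ ≤ Cσ)
    {h : ℂ → ℂ} (hh : DifferentiableOn ℂ h (ball (0:ℂ) 1))
    {c : ℝ} (hc : ∀ x ∈ ball (0:ℂ) 1, v x * ‖h x‖ ≤ c)
    {z₀ : ℂ} (hz₀ : z₀ ∈ ball (0:ℂ) 1) :
    v z₀ * ‖deriv σ z₀ * h (σ z₀)‖ ≤ c := by
  have h0B : (0:ℂ) ∈ ball (0:ℂ) 1 := by simp
  haveI : Nonempty ↥(ball (0:ℂ) 1) := ⟨⟨0, h0B⟩⟩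
  have hM0 : 0 < M := lt_of_lt_of_le (hvpos 0 h0B) (hM 0 h0B)
  -- chain rule
  have hchain : ∀ z ∈ ball (0:ℂ) 1, deriv σ (φ z) * deriv φ z = 1 := by
    intro z hz
    have hφd : DifferentiableAt ℂ φ z := hφ.differentiableAt (isOpen_ball.mem_nhds hz)
    have hσd : DifferentiableAt ℂ σ (φ z) :=
      hσ.differentiableAt (isOpen_ball.mem_nhds (hφmaps hz))
    have hcomp : deriv (σ ∘ φ) z = deriv σ (φ z) * deriv φ z := deriv_comp z hσd hφd
    have hid : (σ ∘ φ) =ᶠ[nhds z] (fun x => x) := by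
      filter_upwards [isOpen_ball.mem_nhds hz] with x hx
      exact hleft x hx
    rw [Filter.EventuallyEq.deriv_eq hid, deriv_id''] at hcomp
    exact hcomp.symm
  have hchain2 : ∀ z ∈ ball (0:ℂ) 1, deriv φ z * deriv σ (φ z) = 1 := by
    intro z hz; rw [mul_comm]; exact hchain z hz
  have hσA : AnalyticOnNhd ℂ σ (ball (0:ℂ) 1) := hσ.analyticOnNhd isOpen_ball
  have hσderiv : DifferentiableOn ℂ (deriv σ) (ball (0:ℂ) 1) := hσA.deriv.differentiableOn
  have key_s : ∀ s : ℝ, 0 < s → s < 1 →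
      v z₀ * ‖deriv σ z₀ * h ((s:ℂ) * σ z₀)‖ ≤ c := by
    intro s hs0 hs1
    set fs : ℂ → ℂ := fun z => deriv σ z * h ((s:ℂ) * σ z) with hfs
    have hsball : closedBall (0:ℂ) s ⊆ ball (0:ℂ) 1 := by
      intro x hx
      rw [mem_closedBall_zero_iff] at hx
      exact mem_ball_zero_iff.mpr (lt_of_le_of_lt hx hs1)
    obtain ⟨Bs, hBs⟩ : ∃ Bs : ℝ, ∀ x ∈ closedBall (0:ℂ) s, ‖h x‖ ≤ Bs := by
      obtain ⟨Bs, hBs⟩ := (isCompact_closedBall (0:ℂ) s).exists_bound_of_continuousOn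
        (hh.continuousOn.mono hsball)
      exact ⟨Bs, fun x hx => hBs x hx⟩
    set Bs' : ℝ := max Bs 0 with hBs'def
    have hBs'0 : 0 ≤ Bs' := le_max_right _ _
    have hBsle : ∀ x ∈ closedBall (0:ℂ) s, ‖h x‖ ≤ Bs' :=
      fun x hx => le_trans (hBs x hx) (le_max_left _ _)
    have habs_s : ‖(s:ℂ)‖ = s := by
      rw [Complex.norm_real, Real.norm_eq_abs]; exact abs_of_pos hs0
    have hmemcb : ∀ z ∈ ball (0:ℂ) 1, ((s:ℂ) * σ z) ∈ closedBall (0:ℂ) s := by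
      intro z hz
      rw [mem_closedBall_zero_iff]
      have h1 : ‖(s:ℂ) * σ z‖ = s * ‖σ z‖ := by
        rw [norm_mul, habs_s]
      rw [h1]
      have h2 : ‖σ z‖ ≤ 1 := le_of_lt (mem_ball_zero_iff.mp (hσmaps hz))
      nlinarith
    have hsmapsto : MapsTo (fun z => (s:ℂ) * σ z) (ball (0:ℂ) 1) (ball (0:ℂ) 1) := by
      intro z hz
      have := hmemcb z hz
      rw [mem_closedBall_zero_iff] at this
      exact mem_ball_zero_iff.mpr (lt_of_le_of_lt this hs1)
    have hfsdiff : DifferentiableOn ℂ fs (ball (0:ℂ) 1) := by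
      apply hσderiv.mul
      exact hh.comp (hσ.const_mul ((s:ℂ))) hsmapsto
    have habsfs : ∀ z ∈ ball (0:ℂ) 1, ‖fs z‖ ≤ Cσ * Bs' := by
      intro z hz
      rw [hfs]
      simp only []
      rw [norm_mul]
      exact mul_le_mul (hCσ z hz) (hBsle _ (hmemcb z hz)) (norm_nonneg _)
        (le_of_lt hCσpos)
    have hfsmem : MemHv0 v fs := by
      refine ⟨hfsdiff, ?_⟩
      intro ε hε
      have hX : (0:ℝ) < Cσ * Bs' + 1 := by positivity
      obtain ⟨δ, hδ1, hδ⟩ := hv0 (ε / (Cσ * Bs' + 1)) (by positivity)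
      refine ⟨δ, hδ1, fun z hz1 hz2 => ?_⟩
      have hzB : z ∈ ball (0:ℂ) 1 := mem_ball_zero_iff.mpr hz1
      have hv' : v z < ε / (Cσ * Bs' + 1) := hδ z hz1 hz2
      have hvnn : 0 ≤ v z := le_of_lt (hvpos z hzB)
      calc v z * ‖fs z‖ ≤ v z * (Cσ * Bs') :=
            mul_le_mul_of_nonneg_left (habsfs z hzB) hvnn
        _ ≤ (ε / (Cσ * Bs' + 1)) * (Cσ * Bs') :=
            mul_le_mul_of_nonneg_right (le_of_lt hv') (by positivity)
        _ < ε := by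
            rw [div_mul_eq_mul_div, div_lt_iff₀ hX]
            nlinarith
    have hiso := hTisom fs hfsmem
    have hrw : (⨆ z : ball (0:ℂ) 1, v z * ‖deriv φ z * fs (φ z)‖)
        = ⨆ z : ball (0:ℂ) 1, v z * ‖h ((s:ℂ) * z)‖ := by
      refine congrArg _ (funext fun z => ?_)
      obtain ⟨z, hz⟩ := z
      simp only [hfs]
      rw [hleft z hz, ← mul_assoc, hchain2 z hz, one_mul]
    have hub : (⨆ z : ball (0:ℂ) 1, v z * ‖h ((s:ℂ) * z)‖) ≤ c := by
      apply ciSup_le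
      rintro ⟨z, hz⟩
      have hsz : ‖(s:ℂ) * z‖ ≤ ‖z‖ := by
        rw [norm_mul, habs_s]
        nlinarith [norm_nonneg z]
      obtain ⟨x₀, hx₀abs, hx₀le⟩ := maxmod_circle hh hz hsz
      have hx₀B : x₀ ∈ ball (0:ℂ) 1 := by
        have hlt : ‖x₀‖ < 1 := by rw [hx₀abs]; exact mem_ball_zero_iff.mp hz
        exact mem_ball_zero_iff.mpr hlt
      have hveq : v x₀ = v z := radial_eq v hvradial hz hx₀abs
      have hvnn : 0 ≤ v z := le_of_lt (hvpos z hz)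
      calc v z * ‖h ((s:ℂ) * z)‖ ≤ v z * ‖h x₀‖ :=
            mul_le_mul_of_nonneg_left hx₀le hvnn
        _ = v x₀ * ‖h x₀‖ := by rw [hveq]
        _ ≤ c := hc x₀ hx₀B
    have hbdd : BddAbove (Set.range fun z : ball (0:ℂ) 1 => v z * ‖fs z‖) := by
      refine ⟨M * (Cσ * Bs'), ?_⟩
      rintro t ⟨⟨z, hz⟩, rfl⟩
      exact mul_le_mul (hM z hz) (habsfs z hz) (norm_nonneg _) (le_of_lt hM0)
    have hle : v z₀ * ‖fs z₀‖
        ≤ ⨆ z : ball (0:ℂ) 1, v z * ‖fs z‖ := le_ciSup hbdd ⟨z₀, hz₀⟩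
    have heq2 : (⨆ z : ball (0:ℂ) 1, v z * ‖fs z‖)
        = ⨆ z : ball (0:ℂ) 1, v z * ‖h ((s:ℂ) * z)‖ := hiso.symm.trans hrw
    calc v z₀ * ‖deriv σ z₀ * h ((s:ℂ) * σ z₀)‖
        = v z₀ * ‖fs z₀‖ := rfl
      _ ≤ ⨆ z : ball (0:ℂ) 1, v z * ‖fs z‖ := hle
      _ = ⨆ z : ball (0:ℂ) 1, v z * ‖h ((s:ℂ) * z)‖ := heq2
      _ ≤ c := hub
  -- pass to the limit s → 1⁻
  have hconth : ContinuousAt h (σ z₀) :=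
    (hh.differentiableAt (isOpen_ball.mem_nhds (hσmaps hz₀))).continuousAt
  have h1 : Filter.Tendsto (fun s : ℝ => (s:ℂ) * σ z₀) (nhds 1) (nhds (σ z₀)) := by
    have hcont : Continuous (fun s : ℝ => (s:ℂ) * σ z₀) :=
      Complex.continuous_ofReal.mul continuous_const
    have := hcont.tendsto 1
    simpa using this
  have h2 : Filter.Tendsto (fun s : ℝ => h ((s:ℂ) * σ z₀)) (nhds 1) (nhds (h (σ z₀))) :=
    hconth.tendsto.comp h1
  have h3 : Filter.Tendsto
      (fun s : ℝ => v z₀ * ‖deriv σ z₀ * h ((s:ℂ) * σ z₀)‖)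
      (nhds 1) (nhds (v z₀ * ‖deriv σ z₀ * h (σ z₀)‖)) := by
    have h4 := (h2.const_mul (deriv σ z₀))
    have h5 := (continuous_norm.tendsto _).comp h4
    exact h5.const_mul (v z₀)
  have h6 : Filter.Tendsto
      (fun s : ℝ => v z₀ * ‖deriv σ z₀ * h ((s:ℂ) * σ z₀)‖)
      (nhdsWithin (1:ℝ) (Set.Iio 1)) (nhds (v z₀ * ‖deriv σ z₀ * h (σ z₀)‖)) :=
    h3.mono_left nhdsWithin_le_nhds
  refine le_of_tendsto h6 ?_
  filter_upwards [Ioo_mem_nhdsLT_of_mem (show (1:ℝ) ∈ Set.Ioc (0:ℝ) 1 by norm_num)] with s hs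
  exact key_s s hs.1 hs.2

set_option maxHeartbeats 1000000 in
lemma dilation_approx
    (v : ℂ → ℝ)
    (hvpos : ∀ z ∈ ball (0:ℂ) 1, 0 < v z)
    (hvradial : ∀ (lam z : ℂ), ‖lam‖ = 1 → z ∈ ball (0:ℂ) 1 → v (lam * z) = v z)
    {M : ℝ} (hM : ∀ z ∈ ball (0:ℂ) 1, v z ≤ M)
    {g : ℂ → ℂ} (hg : MemHv0 v g)
    {ε : ℝ} (hε : 0 < ε) :
    ∃ r : ℝ, 0 < r ∧ r < 1 ∧
      ∀ w ∈ ball (0:ℂ) 1, v w * ‖g w - g ((r:ℂ) * w)‖ ≤ ε := by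
  have h0B : (0:ℂ) ∈ ball (0:ℂ) 1 := by simp
  have hM0 : 0 < M := lt_of_lt_of_le (hvpos 0 h0B) (hM 0 h0B)
  obtain ⟨δ', hδ'1, hδ'⟩ := hg.2 (ε/2) (by positivity)
  set ρ : ℝ := max δ' 0 with hρdef
  have hρ0 : 0 ≤ ρ := le_max_right _ _
  have hρ1 : ρ < 1 := max_lt hδ'1 one_pos
  have hsub : closedBall (0:ℂ) ρ ⊆ ball (0:ℂ) 1 := by
    intro x hx
    rw [mem_closedBall_zero_iff] at hx
    exact mem_ball_zero_iff.mpr (lt_of_le_of_lt hx hρ1)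
  have hgc : ContinuousOn g (closedBall (0:ℂ) ρ) := hg.1.continuousOn.mono hsub
  have huc : UniformContinuousOn g (closedBall (0:ℂ) ρ) :=
    (isCompact_closedBall (0:ℂ) ρ).uniformContinuousOn_of_continuous hgc
  rw [Metric.uniformContinuousOn_iff] at huc
  obtain ⟨η, hη0, hη⟩ := huc (ε / M) (by positivity)
  set r : ℝ := max (1 - η/2) (1/2) with hrdef
  have hr0 : 0 < r := lt_of_lt_of_le (by norm_num) (le_max_right _ _)
  have hr1 : r < 1 := max_lt (by linarith) (by norm_num)
  have hr1' : 1 - r ≤ η/2 := by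
    have := le_max_left (1 - η/2) (1/2)
    linarith
  refine ⟨r, hr0, hr1, ?_⟩
  intro w hw
  have hwa : ‖w‖ < 1 := mem_ball_zero_iff.mp hw
  have habsr : ‖(r:ℂ)‖ = r := by
    rw [Complex.norm_real, Real.norm_eq_abs]; exact abs_of_pos hr0
  have habsrw : ‖(r:ℂ) * w‖ = r * ‖w‖ := by
    rw [norm_mul, habsr]
  have hrwle : ‖(r:ℂ) * w‖ ≤ ‖w‖ := by
    rw [habsrw]; nlinarith [norm_nonneg w]
  have hvw0 : 0 ≤ v w := le_of_lt (hvpos w hw)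
  by_cases hcase : ‖w‖ ≤ ρ
  · have hwK : w ∈ closedBall (0:ℂ) ρ := mem_closedBall_zero_iff.mpr hcase
    have hrwK : ((r:ℂ) * w) ∈ closedBall (0:ℂ) ρ :=
      mem_closedBall_zero_iff.mpr (le_trans hrwle hcase)
    have hdist : dist w ((r:ℂ) * w) < η := by
      rw [Complex.dist_eq]
      have h1 : w - (r:ℂ) * w = (1 - (r:ℂ)) * w := by ring
      rw [h1, norm_mul]
      have h2 : ‖1 - (r:ℂ)‖ = 1 - r := by
        have : ((1 - r : ℝ) : ℂ) = 1 - (r:ℂ) := by push_cast; ring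
        rw [← this, Complex.norm_real, Real.norm_eq_abs]
        exact abs_of_nonneg (by linarith)
      rw [h2]
      nlinarith [norm_nonneg w]
    have hgd : dist (g w) (g ((r:ℂ) * w)) < ε / M := hη w hwK _ hrwK hdist
    rw [Complex.dist_eq] at hgd
    calc v w * ‖g w - g ((r:ℂ) * w)‖ ≤ M * ‖g w - g ((r:ℂ) * w)‖ :=
          mul_le_mul_of_nonneg_right (hM w hw) (norm_nonneg _)
      _ ≤ M * (ε / M) := mul_le_mul_of_nonneg_left (le_of_lt hgd) (le_of_lt hM0)
      _ = ε := by field_simp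
  · push_neg at hcase
    have hδ'w : δ' < ‖w‖ := lt_of_le_of_lt (le_max_left δ' 0) hcase
    have h1 : v w * ‖g w‖ < ε/2 := hδ' w hwa hδ'w
    obtain ⟨x₀, hx₀abs, hx₀le⟩ := maxmod_circle hg.1 hw hrwle
    have hx₀a : ‖x₀‖ < 1 := by rw [hx₀abs]; exact hwa
    have hx₀B : x₀ ∈ ball (0:ℂ) 1 := mem_ball_zero_iff.mpr hx₀a
    have hδ'x₀ : δ' < ‖x₀‖ := by rw [hx₀abs]; exact hδ'w
    have h2 : v x₀ * ‖g x₀‖ < ε/2 := hδ' x₀ hx₀a hδ'x₀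
    have hveq : v x₀ = v w := radial_eq v hvradial hw hx₀abs
    have h3 : v w * ‖g ((r:ℂ) * w)‖ < ε/2 := by
      calc v w * ‖g ((r:ℂ) * w)‖ ≤ v w * ‖g x₀‖ :=
            mul_le_mul_of_nonneg_left hx₀le hvw0
        _ = v x₀ * ‖g x₀‖ := by rw [hveq]
        _ < ε/2 := h2
    have htri : ‖g w - g ((r:ℂ) * w)‖
        ≤ ‖g w‖ + ‖g ((r:ℂ) * w)‖ := by
      simpa [sub_eq_add_neg] using norm_add_le (g w) (-(g ((r:ℂ) * w)))
    calc v w * ‖g w - g ((r:ℂ) * w)‖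
        ≤ v w * (‖g w‖ + ‖g ((r:ℂ) * w)‖) :=
          mul_le_mul_of_nonneg_left htri hvw0
      _ = v w * ‖g w‖ + v w * ‖g ((r:ℂ) * w)‖ := mul_add _ _ _
      _ ≤ ε := by linarith

set_option maxHeartbeats 1000000 in
/-- If v is a radial weight on Δ, φ is an analytic automorphism of Δ
(with holomorphic inverse σ) and T : H_{v_o}(Δ) → H_{v_o}(Δ) is a linear isometry
of the form T(f)(z) = φ'(z)·f(φ(z)), then T is surjective with inverse
S(g)(z) = σ'(z)·g(σ(z)). -/
theorem composition_automorphism_isometry_surjective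
    (v : ℂ → ℝ) (hvcont : ContinuousOn v (ball (0:ℂ) 1))
    (hvpos : ∀ z ∈ ball (0:ℂ) 1, 0 < v z)
    (hvbdd : ∃ M : ℝ, ∀ z ∈ ball (0:ℂ) 1, v z ≤ M)
    (hvradial : ∀ (lam z : ℂ), ‖lam‖ = 1 → z ∈ ball (0:ℂ) 1 →
      v (lam * z) = v z)
    (φ σ : ℂ → ℂ)
    (hφ : DifferentiableOn ℂ φ (ball (0:ℂ) 1))
    (hσ : DifferentiableOn ℂ σ (ball (0:ℂ) 1))
    (hφmaps : MapsTo φ (ball (0:ℂ) 1) (ball (0:ℂ) 1))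
    (hσmaps : MapsTo σ (ball (0:ℂ) 1) (ball (0:ℂ) 1))
    (hleft : ∀ z ∈ ball (0:ℂ) 1, σ (φ z) = z)
    (hright : ∀ z ∈ ball (0:ℂ) 1, φ (σ z) = z)
    (hTmaps : ∀ f : ℂ → ℂ, MemHv0 v f →
      MemHv0 v (fun z => deriv φ z * f (φ z)))
    (hTisom : ∀ f : ℂ → ℂ, MemHv0 v f →
      (⨆ z : ball (0:ℂ) 1, v z * ‖deriv φ z * f (φ z)‖)
        = ⨆ z : ball (0:ℂ) 1, v z * ‖f z‖) :
    ∀ g : ℂ → ℂ, MemHv0 v g →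
      MemHv0 v (fun z => deriv σ z * g (σ z)) ∧
        ∀ z ∈ ball (0:ℂ) 1,
          deriv φ z * (deriv σ (φ z) * g (σ (φ z))) = g z := by
  intro g hg
  have h0B : (0:ℂ) ∈ ball (0:ℂ) 1 := by simp
  obtain ⟨M, hM⟩ := hvbdd
  have hM0 : 0 < M := lt_of_lt_of_le (hvpos 0 h0B) (hM 0 h0B)
  -- analyticity of deriv σ and differentiability of S g
  have hσA : AnalyticOnNhd ℂ σ (ball (0:ℂ) 1) := hσ.analyticOnNhd isOpen_ball
  have hσderiv : DifferentiableOn ℂ (deriv σ) (ball (0:ℂ) 1) := hσA.deriv.differentiableOn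
  have hFdiff : DifferentiableOn ℂ (fun z => deriv σ z * g (σ z)) (ball (0:ℂ) 1) :=
    hσderiv.mul (hg.1.comp hσ hσmaps)
  -- chain rule
  have hchain : ∀ z ∈ ball (0:ℂ) 1, deriv σ (φ z) * deriv φ z = 1 := by
    intro z hz
    have hφd : DifferentiableAt ℂ φ z := hφ.differentiableAt (isOpen_ball.mem_nhds hz)
    have hσd : DifferentiableAt ℂ σ (φ z) :=
      hσ.differentiableAt (isOpen_ball.mem_nhds (hφmaps hz))
    have hcomp : deriv (σ ∘ φ) z = deriv σ (φ z) * deriv φ z := deriv_comp z hσd hφd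
    have hid : (σ ∘ φ) =ᶠ[nhds z] (fun x => x) := by
      filter_upwards [isOpen_ball.mem_nhds hz] with x hx
      exact hleft x hx
    rw [Filter.EventuallyEq.deriv_eq hid, deriv_id''] at hcomp
    exact hcomp.symm
  have hchain2 : ∀ z ∈ ball (0:ℂ) 1, deriv φ z * deriv σ (φ z) = 1 := by
    intro z hz; rw [mul_comm]; exact hchain z hz
  have hident : ∀ z ∈ ball (0:ℂ) 1,
      deriv φ z * (deriv σ (φ z) * g (σ (φ z))) = g z := by
    intro z hz
    rw [hleft z hz, ← mul_assoc, hchain2 z hz, one_mul]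
  refine ⟨⟨hFdiff, ?_⟩, hident⟩
  by_cases hv0 : ∀ ε > (0:ℝ), ∃ δ < (1:ℝ), ∀ z : ℂ,
      ‖z‖ < 1 → δ < ‖z‖ → v z < ε
  · -- Case A : the weight vanishes uniformly at the boundary
    have hb1 : ‖σ 0‖ < 1 := mem_ball_zero_iff.mp (hσmaps h0B)
    have hbpos : 0 < 1 - (‖σ 0‖)^2 := by nlinarith [norm_nonneg (σ 0)]
    set Cσ : ℝ := 16 / (1 - (‖σ 0‖)^2) with hCσdef
    have hCσpos : 0 < Cσ := by positivity
    have hCσ : ∀ z ∈ ball (0:ℂ) 1, ‖deriv σ z‖ ≤ Cσ :=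
      fun z hz => deriv_sigma_bound hφ hσ hφmaps hσmaps hright hz
    intro ε hε
    obtain ⟨r, hr0, hr1, hP1⟩ := dilation_approx v hvpos hvradial hM hg
      (show (0:ℝ) < ε/4 by positivity)
    set h : ℂ → ℂ := fun x => g x - g ((r:ℂ) * x) with hhdef
    have habsr : ‖(r:ℂ)‖ = r := by
      rw [Complex.norm_real, Real.norm_eq_abs]; exact abs_of_pos hr0
    have hrmaps : MapsTo (fun x => (r:ℂ) * x) (ball (0:ℂ) 1) (ball (0:ℂ) 1) := by
      intro x hx
      have hxa : ‖x‖ < 1 := mem_ball_zero_iff.mp hx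
      have : ‖(r:ℂ) * x‖ < 1 := by
        rw [norm_mul, habsr]
        nlinarith [norm_nonneg x]
      exact mem_ball_zero_iff.mpr this
    have hhdiff : DifferentiableOn ℂ h (ball (0:ℂ) 1) :=
      hg.1.sub (hg.1.comp (differentiableOn_id.const_mul _) hrmaps)
    have hP1' : ∀ x ∈ ball (0:ℂ) 1, v x * ‖h x‖ ≤ ε/4 :=
      fun x hx => hP1 x hx
    have hstar : ∀ z ∈ ball (0:ℂ) 1,
        v z * ‖deriv σ z * h (σ z)‖ ≤ ε/4 :=
      fun z hz => star_bound v hvpos hvradial hM φ σ hφ hσ hφmaps hσmaps hleft hright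
        hTisom hv0 hCσpos hCσ hhdiff hP1' hz
    -- bound for |g| on the closed ball of radius r
    have hrball : closedBall (0:ℂ) r ⊆ ball (0:ℂ) 1 := by
      intro x hx
      rw [mem_closedBall_zero_iff] at hx
      exact mem_ball_zero_iff.mpr (lt_of_le_of_lt hx hr1)
    obtain ⟨Br, hBr⟩ : ∃ Br : ℝ, ∀ x ∈ closedBall (0:ℂ) r, ‖g x‖ ≤ Br := by
      obtain ⟨Br, hBr⟩ := (isCompact_closedBall (0:ℂ) r).exists_bound_of_continuousOn
        (hg.1.continuousOn.mono hrball)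
      exact ⟨Br, fun x hx => hBr x hx⟩
    set Br' : ℝ := max Br 0 with hBr'def
    have hBr'0 : 0 ≤ Br' := le_max_right _ _
    have hBrle : ∀ x ∈ closedBall (0:ℂ) r, ‖g x‖ ≤ Br' :=
      fun x hx => le_trans (hBr x hx) (le_max_left _ _)
    have hX : (0:ℝ) < Cσ * Br' + 1 := by positivity
    obtain ⟨δ, hδ1, hδ⟩ := hv0 (ε / (4 * (Cσ * Br' + 1))) (by positivity)
    refine ⟨δ, hδ1, fun z hz1 hz2 => ?_⟩
    have hzB : z ∈ ball (0:ℂ) 1 := mem_ball_zero_iff.mpr hz1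
    have hσzB : σ z ∈ ball (0:ℂ) 1 := hσmaps hzB
    have hrσz : ((r:ℂ) * σ z) ∈ closedBall (0:ℂ) r := by
      rw [mem_closedBall_zero_iff]
      have h1 : ‖(r:ℂ) * σ z‖ = r * ‖σ z‖ := by
        rw [norm_mul, habsr]
      rw [h1]
      have h2 : ‖σ z‖ ≤ 1 := le_of_lt (mem_ball_zero_iff.mp hσzB)
      nlinarith
    have hvnn : 0 ≤ v z := le_of_lt (hvpos z hzB)
    have hdec : deriv σ z * g (σ z)
        = deriv σ z * h (σ z) + deriv σ z * g ((r:ℂ) * σ z) := by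
      simp only [hhdef]; ring
    have htri : ‖deriv σ z * g (σ z)‖
        ≤ ‖deriv σ z * h (σ z)‖ + ‖deriv σ z * g ((r:ℂ) * σ z)‖ := by
      rw [hdec]; exact norm_add_le _ _
    have hterm2 : v z * ‖deriv σ z * g ((r:ℂ) * σ z)‖ < ε/4 := by
      have habs2 : ‖deriv σ z * g ((r:ℂ) * σ z)‖ ≤ Cσ * Br' := by
        rw [norm_mul]
        exact mul_le_mul (hCσ z hzB) (hBrle _ hrσz) (norm_nonneg _)
          (le_of_lt hCσpos)
      have hv' : v z < ε / (4 * (Cσ * Br' + 1)) := hδ z hz1 hz2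
      calc v z * ‖deriv σ z * g ((r:ℂ) * σ z)‖ ≤ v z * (Cσ * Br') :=
            mul_le_mul_of_nonneg_left habs2 hvnn
        _ ≤ (ε / (4 * (Cσ * Br' + 1))) * (Cσ * Br') :=
            mul_le_mul_of_nonneg_right (le_of_lt hv') (by positivity)
        _ < ε/4 := by
            rw [div_mul_eq_mul_div, div_lt_iff₀ (by positivity)]
            nlinarith
    calc v z * ‖deriv σ z * g (σ z)‖
        ≤ v z * (‖deriv σ z * h (σ z)‖
            + ‖deriv σ z * g ((r:ℂ) * σ z)‖) :=
          mul_le_mul_of_nonneg_left htri hvnn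
      _ = v z * ‖deriv σ z * h (σ z)‖
            + v z * ‖deriv σ z * g ((r:ℂ) * σ z)‖ := mul_add _ _ _
      _ < ε := by
          have := hstar z hzB
          linarith
  · -- Case B : the weight does not vanish at the boundary, so g ≡ 0
    push_neg at hv0
    obtain ⟨ε₀, hε₀, hB⟩ := hv0
    have hg0 : ∀ x ∈ ball (0:ℂ) 1, g x = 0 := by
      intro x hx
      have hxa : ‖x‖ < 1 := mem_ball_zero_iff.mp hx
      have hsmall : ∀ ε > (0:ℝ), ‖g x‖ ≤ ε := by
        intro ε hε
        obtain ⟨δ₂, hδ₂1, hδ₂⟩ := hg.2 (ε * ε₀) (by positivity)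
        obtain ⟨z₁, hz₁a, hz₁b, hz₁c⟩ := hB (max δ₂ (‖x‖)) (max_lt hδ₂1 hxa)
        have hz₁B : z₁ ∈ ball (0:ℂ) 1 := mem_ball_zero_iff.mpr hz₁a
        have hxle : ‖x‖ ≤ ‖z₁‖ :=
          le_of_lt (lt_of_le_of_lt (le_max_right δ₂ (‖x‖)) hz₁b)
        obtain ⟨x₀, hx₀abs, hx₀le⟩ := maxmod_circle hg.1 hz₁B hxle
        have hx₀a : ‖x₀‖ < 1 := by rw [hx₀abs]; exact hz₁a
        have hδ₂x₀ : δ₂ < ‖x₀‖ := by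
          rw [hx₀abs]; exact lt_of_le_of_lt (le_max_left _ _) hz₁b
        have h1 : v x₀ * ‖g x₀‖ < ε * ε₀ := hδ₂ x₀ hx₀a hδ₂x₀
        have h2 : v x₀ = v z₁ := radial_eq v hvradial hz₁B hx₀abs
        have h3 : ε₀ ≤ v x₀ := by rw [h2]; exact hz₁c
        nlinarith [norm_nonneg (g x₀), hx₀le]
      by_contra hne
      have hpos : 0 < ‖g x‖ := norm_pos_iff.mpr hne
      have := hsmall (‖g x‖ / 2) (by positivity)
      linarith
    intro ε hε
    refine ⟨0, by norm_num, fun z hz1 _ => ?_⟩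
    have hσz : σ z ∈ ball (0:ℂ) 1 := hσmaps (mem_ball_zero_iff.mpr hz1)
    simp only []
    rw [hg0 (σ z) hσz, mul_zero, norm_zero, mul_zero]
    exact hε
end

section
/- Let γ > 2 and let φ: Δ → Δ, h: Δ → ℂ be holomorphic with h ≢ 0, satisfying |h(z)|^γ |φ(z)| = |z| |φ'(z)|^γ for all z ∈ Δ. Then φ(0) = 0. -/
open Complex Metric Set Filter Topology

/-- Auxiliary: if `A t = t^e * B t` eventually as `t → 0⁺`, with `e > 0`,
`A → CA > 0` and `B → CB`, we get a contradiction. -/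
lemma aux_rpow_limit (e : ℝ) (he : 0 < e) (A B : ℝ → ℝ) (CA CB : ℝ) (hCA : 0 < CA)
    (hA : Filter.Tendsto A (nhdsWithin 0 (Ioi 0)) (nhds CA))
    (hB : Filter.Tendsto B (nhdsWithin 0 (Ioi 0)) (nhds CB))
    (hAB : ∀ᶠ t in nhdsWithin (0:ℝ) (Ioi 0), A t = t ^ e * B t) : False := by
  have hpow : Filter.Tendsto (fun t : ℝ => t ^ e) (nhdsWithin 0 (Ioi 0)) (nhds 0) := by
    have := (Real.continuousAt_rpow_const 0 e (Or.inr he.le)).tendsto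
    rw [Real.zero_rpow he.ne'] at this
    exact this.mono_left nhdsWithin_le_nhds
  have h2 : Filter.Tendsto A (nhdsWithin 0 (Ioi 0)) (nhds 0) := by
    have := hpow.mul hB
    rw [zero_mul] at this
    exact Filter.Tendsto.congr' (Filter.EventuallyEq.symm hAB) this
  have : CA = 0 := tendsto_nhds_unique hA h2
  linarith

/-- Let γ > 2, φ : Δ → Δ and h : Δ → ℂ holomorphic with h ≢ 0,
satisfying |h(z)|^γ|φ(z)| = |z||φ'(z)|^γ on Δ. Then φ(0) = 0. -/
theorem zero_at_origin_of_modulus_identity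
    (γ : ℝ) (hγ : 2 < γ)
    (φ h : ℂ → ℂ)
    (hφ : DifferentiableOn ℂ φ (ball (0:ℂ) 1))
    (hφmaps : MapsTo φ (ball (0:ℂ) 1) (ball (0:ℂ) 1))
    (hh : DifferentiableOn ℂ h (ball (0:ℂ) 1))
    (hhne : ∃ z ∈ ball (0:ℂ) 1, h z ≠ 0)
    (heq : ∀ z ∈ ball (0:ℂ) 1, ‖h z‖ ^ γ * ‖φ z‖
      = ‖z‖ * ‖deriv φ z‖ ^ γ) :
    φ 0 = 0 := by
  by_contra hφ0
  have hγ0 : (0:ℝ) < γ := by linarith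
  have h0mem : (0:ℂ) ∈ ball (0:ℂ) 1 := by simp
  have hhA : AnalyticOnNhd ℂ h (ball 0 1) := hh.analyticOnNhd isOpen_ball
  have hφA : AnalyticOnNhd ℂ φ (ball 0 1) := hφ.analyticOnNhd isOpen_ball
  have hφ'A : AnalyticOnNhd ℂ (deriv φ) (ball 0 1) := hφA.deriv
  obtain ⟨z₁, hz₁, hz₁ne⟩ := hhne
  -- h is not eventually zero near 0
  have hhne0 : ¬ ∀ᶠ z in 𝓝 (0:ℂ), h z = 0 := by
    intro hev
    exact hz₁ne (hhA.eqOn_zero_of_preconnected_of_eventuallyEq_zero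
      (convex_ball (0:ℂ) 1).isPreconnected h0mem hev hz₁)
  -- φ is continuous at 0 and nonzero near 0
  have hφc : ContinuousAt φ 0 := (hφA 0 h0mem).continuousAt
  have hφnear : ∀ᶠ z in 𝓝 (0:ℂ), φ z ≠ 0 := hφc.eventually_ne hφ0
  have hballnear : ∀ᶠ z in 𝓝 (0:ℂ), z ∈ ball (0:ℂ) 1 := isOpen_ball.eventually_mem h0mem
  -- deriv φ is not eventually zero near 0
  have hφ'ne0 : ¬ ∀ᶠ z in 𝓝 (0:ℂ), deriv φ z = 0 := by
    intro hev
    apply hhne0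
    filter_upwards [hev, hφnear, hballnear] with z h1 h2 h3
    have h4 := heq z h3
    rw [h1] at h4
    simp only [norm_zero, Real.zero_rpow hγ0.ne', mul_zero] at h4
    rcases mul_eq_zero.mp h4 with h5 | h5
    · have : ‖h z‖ = 0 := by
        by_contra habs
        exact habs (Real.rpow_eq_zero_iff_of_nonneg (norm_nonneg _) |>.mp h5).1
      simpa using this
    · exact absurd h5 (by simpa using h2)
  -- factor h and deriv φ
  obtain ⟨k, g, hgA, hg0, hgeq⟩ := (hhA 0 h0mem).exists_eventuallyEq_pow_smul_nonzero_iff.mpr hhne0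
  obtain ⟨l, u, huA, hu0, hueq⟩ :=
    (hφ'A 0 h0mem).exists_eventuallyEq_pow_smul_nonzero_iff.mpr hφ'ne0
  -- the filter of positive reals approaching 0
  set L := nhdsWithin (0:ℝ) (Ioi 0) with hL
  have hcoe : Filter.Tendsto (fun t : ℝ => (t:ℂ)) L (𝓝 0) := by
    have : Filter.Tendsto (fun t : ℝ => (t:ℂ)) (𝓝 0) (𝓝 ((0:ℝ):ℂ)) :=
      Complex.continuous_ofReal.continuousAt
    simpa using this.mono_left nhdsWithin_le_nhds
  -- pull back the eventual facts
  have Ev1 : ∀ᶠ t : ℝ in L, h (t:ℂ) = (t:ℂ) ^ k * g (t:ℂ) := by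
    filter_upwards [hcoe.eventually hgeq] with t ht
    simpa using ht
  have Ev2 : ∀ᶠ t : ℝ in L, deriv φ (t:ℂ) = (t:ℂ) ^ l * u (t:ℂ) := by
    filter_upwards [hcoe.eventually hueq] with t ht
    simpa using ht
  have Ev3 : ∀ᶠ t : ℝ in L, ((t:ℂ) ∈ ball (0:ℂ) 1) := hcoe.eventually hballnear
  have Ev4 : ∀ᶠ t : ℝ in L, (0:ℝ) < t := self_mem_nhdsWithin
  -- main eventual equation:  G^γ * P = t^(1 + lγ - kγ) * U^γ
  set e : ℝ := 1 + (l:ℝ) * γ - (k:ℝ) * γ with he_def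
  have EvMain : ∀ᶠ t : ℝ in L,
      ‖g (t:ℂ)‖ ^ γ * ‖φ (t:ℂ)‖
        = t ^ e * ‖u (t:ℂ)‖ ^ γ := by
    filter_upwards [Ev1, Ev2, Ev3, Ev4] with t h1 h2 h3 ht
    have habs_t : ‖(t:ℂ)‖ = t := by
      rw [Complex.norm_real, Real.norm_of_nonneg ht.le]
    have key := heq (t:ℂ) h3
    rw [h1, h2] at key
    rw [norm_mul, norm_mul, norm_pow, norm_pow, habs_t] at key
    have hG : (0:ℝ) ≤ ‖g (t:ℂ)‖ := norm_nonneg _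
    have hU : (0:ℝ) ≤ ‖u (t:ℂ)‖ := norm_nonneg _
    have htk : (0:ℝ) ≤ t ^ k := pow_nonneg ht.le _
    have htl : (0:ℝ) ≤ t ^ l := pow_nonneg ht.le _
    rw [Real.mul_rpow htk hG, Real.mul_rpow htl hU] at key
    -- key : (t^k)^γ * G^γ * P = t * ((t^l)^γ * U^γ)
    have hkpow : (t ^ k : ℝ) ^ γ = t ^ ((k:ℝ) * γ) := by
      rw [← Real.rpow_natCast t k, ← Real.rpow_mul ht.le]
    have hlpow : (t ^ l : ℝ) ^ γ = t ^ ((l:ℝ) * γ) := by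
      rw [← Real.rpow_natCast t l, ← Real.rpow_mul ht.le]
    rw [hkpow, hlpow] at key
    have hkpos : (0:ℝ) < t ^ ((k:ℝ) * γ) := Real.rpow_pos_of_pos ht _
    have step : ‖g (t:ℂ)‖ ^ γ * ‖φ (t:ℂ)‖
        = (t * t ^ ((l:ℝ) * γ) / t ^ ((k:ℝ) * γ)) * ‖u (t:ℂ)‖ ^ γ := by
      field_simp
      rw [mul_comm γ (k:ℝ)]
      nlinarith [key]
    rw [step]
    congr 1
    rw [he_def, Real.rpow_sub ht, Real.rpow_add ht, Real.rpow_one]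
  -- limits of both sides
  have hgc : Filter.Tendsto (fun t : ℝ => ‖g (t:ℂ)‖ ^ γ * ‖φ (t:ℂ)‖) L
      (𝓝 (‖g 0‖ ^ γ * ‖φ 0‖)) := by
    have t1 : Filter.Tendsto (fun t : ℝ => ‖g (t:ℂ)‖) L (𝓝 (‖g 0‖)) :=
      (continuous_norm.continuousAt.tendsto.comp (hgA.continuousAt.tendsto.comp hcoe))
    have t2 : Filter.Tendsto (fun t : ℝ => ‖φ (t:ℂ)‖) L (𝓝 (‖φ 0‖)) :=
      (continuous_norm.continuousAt.tendsto.comp (hφc.tendsto.comp hcoe))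
    exact (((Real.continuousAt_rpow_const _ γ (Or.inr hγ0.le)).tendsto.comp t1)).mul t2
  have huc : Filter.Tendsto (fun t : ℝ => ‖u (t:ℂ)‖ ^ γ) L
      (𝓝 (‖u 0‖ ^ γ)) := by
    have t1 : Filter.Tendsto (fun t : ℝ => ‖u (t:ℂ)‖) L (𝓝 (‖u 0‖)) :=
      (continuous_norm.continuousAt.tendsto.comp (huA.continuousAt.tendsto.comp hcoe))
    exact (Real.continuousAt_rpow_const _ γ (Or.inr hγ0.le)).tendsto.comp t1
  have hCA : (0:ℝ) < ‖g 0‖ ^ γ * ‖φ 0‖ :=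
    mul_pos (Real.rpow_pos_of_pos (norm_pos_iff.mpr hg0) _) (norm_pos_iff.mpr hφ0)
  have hCB : (0:ℝ) < ‖u 0‖ ^ γ := Real.rpow_pos_of_pos (norm_pos_iff.mpr hu0) _
  -- case analysis on e
  rcases lt_trichotomy e 0 with he | he | he
  · -- e < 0 : rewrite as U^γ = t^(-e) * (G^γ * P)
    refine aux_rpow_limit (-e) (by linarith) _ _ _ _ hCB huc hgc ?_
    filter_upwards [EvMain, Ev4] with t h1 ht
    rw [h1]
    rw [← mul_assoc, ← Real.rpow_add ht]
    norm_num
  · -- e = 0 : (k - l) γ = 1, impossible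
    have hkl : (k:ℝ) * γ = 1 + (l:ℝ) * γ := by
      have := he_def ▸ he; linarith
    rcases le_or_gt k l with hle | hlt
    · have : (k:ℝ) * γ ≤ (l:ℝ) * γ := by
        apply mul_le_mul_of_nonneg_right _ hγ0.le
        exact_mod_cast hle
      linarith
    · have hk1 : (l:ℝ) + 1 ≤ (k:ℝ) := by exact_mod_cast hlt
      nlinarith
  · -- e > 0
    exact aux_rpow_limit e he _ _ _ _ hCA hgc huc EvMain
end

section
/- Let φ: Δ → Δ be holomorphic and suppose that for all z in a non-empty open subset W of Δ, ((|φ(z)|² + 1)|φ'(z)|²)/(1−|φ(z)|²)³ = (|z|² + 1)/(1−|z|²)³. Then |φ(z)| ≥ |z| for all z ∈ W. -/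
open Complex Metric Set

noncomputable def mob (a w : ℂ) : ℂ := (a - w) / (1 - (starRingEnd ℂ) a * w)

lemma mob_den_ne (a w : ℂ) (ha : ‖a‖ < 1) (hw : ‖w‖ < 1) :
    (1 - (starRingEnd ℂ) a * w) ≠ 0 := by
  intro h
  have : ‖((starRingEnd ℂ) a * w)‖ = 1 := by
    have : (starRingEnd ℂ) a * w = 1 := by linear_combination -h
    simp [this]
  rw [norm_mul, Complex.norm_conj] at this
  nlinarith [norm_nonneg a, norm_nonneg w]

lemma normSq_key (a w : ℂ) :
    Complex.normSq (1 - (starRingEnd ℂ) a * w) - Complex.normSq (a - w)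
      = (1 - Complex.normSq a) * (1 - Complex.normSq w) := by
  simp [Complex.normSq_apply, Complex.sub_re, Complex.sub_im, Complex.mul_re, Complex.mul_im,
    Complex.one_re, Complex.one_im, Complex.conj_re, Complex.conj_im]
  ring

lemma mob_mem (a w : ℂ) (ha : ‖a‖ < 1) (hw : ‖w‖ < 1) :
    ‖mob a w‖ < 1 := by
  have hden := mob_den_ne a w ha hw
  have hdpos : 0 < Complex.normSq (1 - (starRingEnd ℂ) a * w) :=
    Complex.normSq_pos.2 hden
  have hkey := normSq_key a w
  have h1 : Complex.normSq a < 1 := by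
    rw [← Complex.sq_norm]; nlinarith [norm_nonneg a]
  have h2 : Complex.normSq w < 1 := by
    rw [← Complex.sq_norm]; nlinarith [norm_nonneg w]
  have : Complex.normSq (mob a w) < 1 := by
    rw [mob, Complex.normSq_div, div_lt_one hdpos]
    nlinarith [Complex.normSq_nonneg a, Complex.normSq_nonneg w]
  rw [← Complex.sq_norm] at this
  nlinarith [norm_nonneg (mob a w)]

lemma mob_hasDerivAt (a w : ℂ) (h : (1 - (starRingEnd ℂ) a * w) ≠ 0) :
    HasDerivAt (mob a) ((Complex.normSq a - 1) / (1 - (starRingEnd ℂ) a * w) ^ 2) w := by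
  have h1 : HasDerivAt (fun x : ℂ => a - x) (-1) w := by
    simpa using (hasDerivAt_id w).const_sub a
  have h2 : HasDerivAt (fun x : ℂ => 1 - (starRingEnd ℂ) a * x) (-((starRingEnd ℂ) a)) w := by
    simpa using ((hasDerivAt_id w).const_mul ((starRingEnd ℂ) a)).const_sub 1
  have := h1.div h2 h
  refine HasDerivAt.congr_deriv this ?_
  have hns : ((starRingEnd ℂ) a) * a = (Complex.normSq a : ℂ) := by
    rw [mul_comm]; exact Complex.mul_conj a
  rw [div_left_inj' (pow_ne_zero 2 h)]
  linear_combination hns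

lemma mob_self (a : ℂ) (h : (1 - (starRingEnd ℂ) a * a) ≠ 0) : mob a a = 0 := by
  simp [mob]

/-- Schwarz–Pick -/
lemma schwarz_pick (φ : ℂ → ℂ) (hφ : DifferentiableOn ℂ φ (ball (0:ℂ) 1))
    (hφmaps : MapsTo φ (ball (0:ℂ) 1) (ball (0:ℂ) 1)) (z : ℂ) (hz : z ∈ ball (0:ℂ) 1) :
    ‖deriv φ z‖ * (1 - ‖z‖ ^ 2) ≤ 1 - ‖φ z‖ ^ 2 := by
  have hz1 : ‖z‖ < 1 := by simpa using hz
  have hfz : φ z ∈ ball (0:ℂ) 1 := hφmaps hz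
  have hfz1 : ‖φ z‖ < 1 := by simpa using hfz
  set b := φ z with hb
  set g : ℂ → ℂ := fun w => mob b (φ (mob z w)) with hgdef
  -- g maps ball to ball
  have hmapsg : MapsTo g (ball (0:ℂ) 1) (ball (0:ℂ) 1) := by
    intro w hw
    have hw1 : ‖w‖ < 1 := by simpa using hw
    have h1 : ‖mob z w‖ < 1 := mob_mem z w hz1 hw1
    have h2 : φ (mob z w) ∈ ball (0:ℂ) 1 := hφmaps (by simpa using h1)
    have h3 : ‖(φ (mob z w))‖ < 1 := by simpa using h2
    simpa using mob_mem b _ hfz1 h3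
  -- g 0 = 0
  have hm0 : mob z 0 = z := by simp [mob]
  have hg0 : g 0 = 0 := by
    rw [hgdef]
    simp only [hm0, ← hb]
    exact mob_self b (mob_den_ne b b hfz1 hfz1)
  -- derivative of g at points of ball
  have hderiv : ∀ w ∈ ball (0:ℂ) 1, HasDerivAt g
      ((Complex.normSq b - 1) / (1 - (starRingEnd ℂ) b * (φ (mob z w))) ^ 2 *
        (deriv φ (mob z w) * ((Complex.normSq z - 1) / (1 - (starRingEnd ℂ) z * w) ^ 2))) w := by
    intro w hw
    have hw1 : ‖w‖ < 1 := by simpa using hw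
    have h1 : ‖mob z w‖ < 1 := mob_mem z w hz1 hw1
    have hmz : mob z w ∈ ball (0:ℂ) 1 := by simpa using h1
    have h3 : ‖(φ (mob z w))‖ < 1 := by simpa using hφmaps hmz
    have d1 : HasDerivAt (mob z) ((Complex.normSq z - 1) / (1 - (starRingEnd ℂ) z * w) ^ 2) w :=
      mob_hasDerivAt z w (mob_den_ne z w hz1 hw1)
    have d2 : HasDerivAt φ (deriv φ (mob z w)) (mob z w) :=
      ((hφ.differentiableAt (isOpen_ball.mem_nhds hmz))).hasDerivAt
    have d3 : HasDerivAt (mob b)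
        ((Complex.normSq b - 1) / (1 - (starRingEnd ℂ) b * (φ (mob z w))) ^ 2) (φ (mob z w)) :=
      mob_hasDerivAt b _ (mob_den_ne b _ hfz1 h3)
    exact (d3.comp w (d2.comp w d1) : _)
  have hgd : DifferentiableOn ℂ g (ball (0:ℂ) 1) := fun w hw =>
    ((hderiv w hw).differentiableAt).differentiableWithinAt
  have hle : ‖deriv g 0‖ ≤ 1 :=
    Complex.norm_deriv_le_one_of_mapsTo_ball hgd (by rw [hg0]; exact hmapsg.mono_right ball_subset_closedBall) one_pos
  have hD := (hderiv 0 (by simp)).deriv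
  rw [hD] at hle
  -- simplify
  rw [hm0] at hle
  have e1 : (1 - (starRingEnd ℂ) b * φ z) = 1 - (Complex.normSq b : ℂ) := by
    rw [← hb, mul_comm]
    rw [Complex.mul_conj]
  rw [e1] at hle
  simp only [mul_zero, sub_zero, one_pow, div_one, norm_mul, norm_div] at hle
  have hb2 : Complex.normSq b < 1 := by rw [← Complex.sq_norm]; nlinarith [norm_nonneg b]
  have hz2 : Complex.normSq z < 1 := by rw [← Complex.sq_norm]; nlinarith [norm_nonneg z]
  have a1 : ‖(Complex.normSq b - 1 : ℂ)‖ = 1 - Complex.normSq b := by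
    rw [← Complex.ofReal_one, ← Complex.ofReal_sub, Complex.norm_real, Real.norm_eq_abs]
    rw [abs_of_nonpos (by linarith)]; ring
  have a2 : ‖(Complex.normSq z - 1 : ℂ)‖ = 1 - Complex.normSq z := by
    rw [← Complex.ofReal_one, ← Complex.ofReal_sub, Complex.norm_real, Real.norm_eq_abs]
    rw [abs_of_nonpos (by linarith)]; ring
  have a3 : ‖((1 : ℂ) - (Complex.normSq b : ℂ))‖ = 1 - Complex.normSq b := by
    rw [← Complex.ofReal_one, ← Complex.ofReal_sub, Complex.norm_real, Real.norm_eq_abs]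
    exact abs_of_nonneg (by linarith)
  rw [a1, a2] at hle
  have a4 : ‖(((1:ℂ) - (Complex.normSq b : ℂ)) ^ 2)‖ = (1 - Complex.normSq b)^2 := by
    rw [norm_pow, a3]
  rw [a4] at hle
  have hbpos : 0 < 1 - Complex.normSq b := by linarith
  rw [div_mul_eq_mul_div, div_le_one (by positivity)] at hle
  have hsz : Complex.normSq z = ‖z‖ ^ 2 := (Complex.sq_norm z).symm
  have hsb : Complex.normSq b = ‖b‖ ^ 2 := (Complex.sq_norm b).symm
  rw [hsz, hsb] at hle
  have hp : 0 < 1 - ‖b‖ ^ 2 := by nlinarith [norm_nonneg b]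
  nlinarith [norm_nonneg (deriv φ z)]

/-- If φ : Δ → Δ is holomorphic and, on a non-empty open subset
W ⊆ Δ, ((|φ(z)|²+1)|φ'(z)|²)/(1-|φ(z)|²)³ = (|z|²+1)/(1-|z|²)³, then
|φ(z)| ≥ |z| on W. -/
theorem abs_ge_of_laplacian_identity
    (φ : ℂ → ℂ) (hφ : DifferentiableOn ℂ φ (ball (0:ℂ) 1))
    (hφmaps : MapsTo φ (ball (0:ℂ) 1) (ball (0:ℂ) 1))
    (W : Set ℂ) (hWopen : IsOpen W) (hWne : W.Nonempty) (hWsub : W ⊆ ball (0:ℂ) 1)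
    (heq : ∀ z ∈ W,
      (‖φ z‖ ^ 2 + 1) * ‖deriv φ z‖ ^ 2
          / (1 - ‖φ z‖ ^ 2) ^ 3
        = (‖z‖ ^ 2 + 1) / (1 - ‖z‖ ^ 2) ^ 3) :
    ∀ z ∈ W, ‖z‖ ≤ ‖φ z‖ := by
  intro z hz
  have hzb : z ∈ ball (0:ℂ) 1 := hWsub hz
  have hsp := schwarz_pick φ hφ hφmaps z hzb
  have hz1 : ‖z‖ < 1 := by simpa using hzb
  have hf1 : ‖φ z‖ < 1 := by simpa using hφmaps hzb
  set A := ‖φ z‖ ^ 2 with hA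
  set B := ‖z‖ ^ 2 with hB
  set D := ‖deriv φ z‖ with hD
  have hA0 : 0 ≤ A := by positivity
  have hB0 : 0 ≤ B := by positivity
  have hD0 : 0 ≤ D := by positivity
  have hA1 : A < 1 := by nlinarith [norm_nonneg (φ z)]
  have hB1 : B < 1 := by nlinarith [norm_nonneg z]
  have he := heq z hz
  have hpA : (0:ℝ) < (1 - ‖φ z‖ ^ 2) ^ 3 := pow_pos (by nlinarith) 3
  have hpB : (0:ℝ) < (1 - ‖z‖ ^ 2) ^ 3 := pow_pos (by nlinarith) 3
  rw [div_eq_div_iff hpA.ne' hpB.ne'] at he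
  rw [← hA, ← hB, ← hD] at he
  -- he : (A+1)*D^2*(1-B)^3 = (B+1)*(1-A)^3
  have hB' : (0:ℝ) ≤ 1 - B := by linarith
  have hA' : (0:ℝ) ≤ 1 - A := by linarith
  have hint : 0 ≤ D * (1 - B) * (1 - A) := mul_nonneg (mul_nonneg hD0 hB') hA'
  have h1 : D^2*(1-B)^2 ≤ (1-A)^2 := by nlinarith [hint]
  have hcoef : (0:ℝ) ≤ (A+1)*(1-B) := mul_nonneg (by linarith) hB'
  have h2 : (A+1)*(1-B) * (D^2*(1-B)^2) ≤ (A+1)*(1-B) * ((1-A)^2) :=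
    mul_le_mul_of_nonneg_left h1 hcoef
  have hq : (0:ℝ) < (1-A)^2 := pow_pos (by linarith) 2
  have h3 : (B+1)*(1-A)^3 ≤ (A+1)*(1-B)*(1-A)^2 := by nlinarith [h2]
  have hBA : B ≤ A := by nlinarith [hq, h3]
  exact (pow_le_pow_iff_left₀ (norm_nonneg z) (norm_nonneg (φ z)) two_ne_zero).1 hBA
end

section
/- Let φ: Δ → Δ be holomorphic with a zero of order exactly 2 at a point a ∈ Δ, a ≠ 0. Write φ(z) = (z−a)²ψ(z) with ψ holomorphic. If 4|ψ(a)| = (1 + 1/|a|)/(1−|a|)³ and sup_{z∈Δ}|φ(z)| ≤ 1, then a contradiction arises; i.e., no such φ exists. -/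
open Complex Metric Set Filter

/-- There is no holomorphic φ : Δ → Δ with a zero of order exactly
2 at some a ≠ 0, written φ(z) = (z-a)²ψ(z) with ψ holomorphic and ψ(a) ≠ 0,
such that 4|ψ(a)| = (1 + 1/|a|)/(1-|a|)³ and |φ| ≤ 1 on Δ. -/
theorem no_double_zero_with_exact_value
    (φ ψ : ℂ → ℂ) (a : ℂ) (ha : a ∈ ball (0:ℂ) 1) (ha0 : a ≠ 0)
    (hφ : DifferentiableOn ℂ φ (ball (0:ℂ) 1))
    (hψ : DifferentiableOn ℂ ψ (ball (0:ℂ) 1))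
    (hfact : ∀ z ∈ ball (0:ℂ) 1, φ z = (z - a) ^ 2 * ψ z)
    (hψa : ψ a ≠ 0)
    (hval : 4 * ‖ψ a‖
      = (1 + 1 / ‖a‖) / (1 - ‖a‖) ^ 3)
    (hbd : ∀ z ∈ ball (0:ℂ) 1, ‖φ z‖ ≤ 1) :
    False := by
  set r : ℝ := ‖a‖ with hr
  have hr0 : 0 < r := by simpa [hr] using norm_pos_iff.mpr ha0
  have hr1 : r < 1 := by simpa [hr] using mem_ball_zero_iff.mp ha
  -- Step 1: for each ρ ∈ (r,1), |ψ a| * (ρ - r)^2 ≤ 1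
  have key : ∀ ρ : ℝ, r < ρ → ρ < 1 → ‖ψ a‖ * (ρ - r) ^ 2 ≤ 1 := by
    intro ρ hρr hρ1
    have hdiff : (0:ℝ) < ρ - r := sub_pos.mpr hρr
    have hρ0 : 0 < ρ := lt_trans hr0 hρr
    have hsub : closure (ball (0:ℂ) ρ) ⊆ ball (0:ℂ) 1 := by
      rw [closure_ball (0:ℂ) (ne_of_gt hρ0)]
      exact (closedBall_subset_ball hρ1)
    have hdc : DiffContOnCl ℂ ψ (ball (0:ℂ) ρ) :=
      (hψ.mono hsub).diffContOnCl
    have hbound : ∀ z ∈ frontier (ball (0:ℂ) ρ),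
        ‖ψ z‖ ≤ 1 / (ρ - r) ^ 2 := by
      intro z hz
      rw [frontier_ball (0:ℂ) (ne_of_gt hρ0)] at hz
      have hznorm : ‖z‖ = ρ := by simpa using mem_sphere_zero_iff_norm.mp hz
      have hz1 : z ∈ ball (0:ℂ) 1 := by
        rw [mem_ball_zero_iff]
        simpa [hznorm] using hρ1
      have hza : ρ - r ≤ ‖z - a‖ := by
        have := norm_sub_norm_le z a
        simpa [hznorm, ← hr] using this
      have hza0 : (0:ℝ) < ρ - r := sub_pos.mpr hρr
      have hφz : ‖φ z‖ = ‖z - a‖ ^ 2 * ‖ψ z‖ := by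
        rw [hfact z hz1]; simp [map_mul, map_pow]
      have h1 : ‖z - a‖ ^ 2 * ‖ψ z‖ ≤ 1 := by
        rw [← hφz]; exact hbd z hz1
      have h2 : (ρ - r) ^ 2 ≤ ‖z - a‖ ^ 2 :=
        pow_le_pow_left₀ (le_of_lt hza0) hza 2
      have h3 : (ρ - r) ^ 2 * ‖ψ z‖ ≤ 1 :=
        le_trans (mul_le_mul_of_nonneg_right h2 (norm_nonneg _)) h1
      rw [le_div_iff₀ (by positivity)]
      linarith [h3]
    have hacl : a ∈ closure (ball (0:ℂ) ρ) :=
      subset_closure (mem_ball_zero_iff.mpr (by simpa [← hr] using hρr))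
    have := Complex.norm_le_of_forall_mem_frontier_norm_le
      isBounded_ball hdc hbound hacl
    rw [le_div_iff₀ (by positivity)] at this
    linarith [this]
  -- Step 2: pass to the limit ρ → 1⁻
  have hlim : ‖ψ a‖ * (1 - r) ^ 2 ≤ 1 := by
    have hcont : Tendsto (fun ρ : ℝ => ‖ψ a‖ * (ρ - r) ^ 2)
        (nhdsWithin 1 (Ioo r 1)) (nhds (‖ψ a‖ * (1 - r) ^ 2)) := by
      apply Tendsto.mono_left _ nhdsWithin_le_nhds
      exact (Continuous.tendsto (by continuity) 1)
    have hne : (nhdsWithin (1:ℝ) (Ioo r 1)).NeBot := by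
      apply right_nhdsWithin_Ioo_neBot hr1
    refine le_of_tendsto hcont ?_
    filter_upwards [self_mem_nhdsWithin] with ρ hρ
    exact key ρ hρ.1 hρ.2
  -- Step 3: arithmetic contradiction
  have hM : 0 ≤ ‖ψ a‖ := norm_nonneg _
  have h1r : (0:ℝ) < 1 - r := by linarith
  have hval' : 4 * ‖ψ a‖ * (1 - r) ^ 3 * r = r + 1 := by
    rw [hval]
    field_simp
  nlinarith [sq_nonneg (2*r - 1), sq_nonneg r, mul_pos h1r hr0,
    mul_le_mul_of_nonneg_right hlim (le_of_lt (mul_pos h1r hr0))]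
end
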